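/- arXiv:1711.07335 — 4 statements merged into one kernel-verified Lean document; each statement's English description precedes it below -/
import Mathlib

section
/- Let $X, Y$ be comonotone non-negative random variables with continuous distribution functions, say $X = F_X^{-1}(U)$, $Y = F_Y^{-1}(U)$ for $U$ uniform on $(0,1)$. Then for almost every $\alpha \in (0,1)$, $E[Y \mid X + Y = \mathrm{VaR}_\alpha(X+Y)] = \mathrm{VaR}_\alpha(Y)$ and hence $E^{Q^{X+Y}_\alpha}[Y] = M_{\phi_\alpha}(Y)$ for any admissible spectrum $\phi_\alpha$, where $dQ^{X+Y}_\alpha/dP = \phi_\alpha(F_{X+Y}(X+Y))$. -/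
open MeasureTheory Filter Set
open scoped Topology

def IsAdmissibleSpectrum (φ : ℝ → ℝ) : Prop :=
  Measurable φ ∧ (∀ u ∈ Set.Ico (0:ℝ) 1, 0 ≤ φ u) ∧
  MonotoneOn φ (Set.Ico 0 1) ∧
  (∀ u ∈ Set.Ico (0:ℝ) 1, ContinuousWithinAt φ (Set.Ici u) u) ∧
  ∫ u in Set.Ioo (0:ℝ) 1, φ u = 1

/-- Value-at-risk: left-continuous generalized inverse of the distribution function. -/
noncomputable def VaR {Ω : Type*} [MeasurableSpace Ω] (P : Measure Ω)
    (Z : Ω → ℝ) (α : ℝ) : ℝ :=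
  sInf {z : ℝ | α ≤ (P {ω | Z ω ≤ z}).toReal}

/-- The spectral risk measure `M_φ(Z) = ∫_0^1 VaR_u(Z) φ(u) du`. -/
noncomputable def SRM {Ω : Type*} [MeasurableSpace Ω] (P : Measure Ω)
    (φ : ℝ → ℝ) (Z : Ω → ℝ) : ℝ :=
  ∫ u in Set.Ioo (0:ℝ) 1, VaR P Z u * φ u

section Aux

set_option linter.unusedSectionVars false
set_option linter.unusedVariables false

variable {Ω : Type*} [MeasurableSpace Ω] (P : Measure Ω) [IsProbabilityMeasure P] {Z : Ω → ℝ}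

lemma F_mono : Monotone (fun z => (P {ω | Z ω ≤ z}).toReal) := by
  intro s t hst
  exact ENNReal.toReal_mono (measure_ne_top P _)
    (measure_mono (fun ω hω => le_trans hω hst))

lemma F_le_one (z : ℝ) : (P {ω | Z ω ≤ z}).toReal ≤ 1 := by
  have := ENNReal.toReal_mono (measure_ne_top P univ) (measure_mono (subset_univ {ω | Z ω ≤ z}))
  simpa [measure_univ] using this

lemma F_neg (hZ0 : ∀ ω, 0 ≤ Z ω) {z : ℝ} (hz : z < 0) :
    (P {ω | Z ω ≤ z}).toReal = 0 := by
  have : {ω | Z ω ≤ z} = ∅ := by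
    ext ω; simp only [mem_setOf_eq, mem_empty_iff_false, iff_false, not_le]
    exact lt_of_lt_of_le hz (hZ0 ω)
  simp [this]

lemma exists_F_ge (hZm : Measurable Z) {b : ℝ} (hb : b < 1) :
    ∃ z, b ≤ (P {ω | Z ω ≤ z}).toReal := by
  rcases le_or_gt b 0 with hb0 | hb0
  · exact ⟨0, le_trans hb0 ENNReal.toReal_nonneg⟩
  have hmono : Monotone (fun n : ℕ => {ω | Z ω ≤ (n : ℝ)}) := by
    intro m n hmn ω hω
    simp only [mem_setOf_eq] at hω ⊢
    exact le_trans hω (by exact_mod_cast hmn)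
  have hU : (⋃ n : ℕ, {ω | Z ω ≤ (n : ℝ)}) = univ := by
    ext ω; simp only [mem_iUnion, mem_setOf_eq, mem_univ, iff_true]
    obtain ⟨n, hn⟩ := exists_nat_ge (Z ω)
    exact ⟨n, hn⟩
  have htend := tendsto_measure_iUnion_atTop (μ := P) hmono
  rw [hU, measure_univ] at htend
  have hlt : ENNReal.ofReal b < 1 := ENNReal.ofReal_lt_one.mpr hb
  obtain ⟨n, hn⟩ := (htend.eventually (eventually_gt_nhds hlt)).exists
  refine ⟨n, ?_⟩
  have := ENNReal.toReal_mono (measure_ne_top P _) hn.le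
  rw [ENNReal.toReal_ofReal hb0.le] at this
  exact this

lemma VaR_univ_eq {α : ℝ} (hα : α ≤ 0) : VaR P Z α = 0 := by
  have hset : {z : ℝ | α ≤ (P {ω | Z ω ≤ z}).toReal} = univ := by
    ext z; simp only [mem_setOf_eq, mem_univ, iff_true]
    exact le_trans hα ENNReal.toReal_nonneg
  rw [VaR, hset]
  exact Real.sInf_of_not_bddBelow not_bddBelow_univ

lemma VaR_nonneg (hZ0 : ∀ ω, 0 ≤ Z ω) (α : ℝ) : 0 ≤ VaR P Z α := by
  rcases lt_or_ge 0 α with hα | hα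
  · apply Real.sInf_nonneg
    intro z hz
    by_contra hneg
    push_neg at hneg
    have := F_neg P hZ0 hneg
    simp only [mem_setOf_eq] at hz
    rw [this] at hz
    exact absurd (lt_of_lt_of_le hα hz) (lt_irrefl 0)
  · rw [VaR_univ_eq P hα]

lemma VaR_bddBelow (hZ0 : ∀ ω, 0 ≤ Z ω) {α : ℝ} (hα : 0 < α) :
    BddBelow {z : ℝ | α ≤ (P {ω | Z ω ≤ z}).toReal} := by
  refine ⟨0, fun z hz => ?_⟩
  by_contra hneg
  push_neg at hneg
  have := F_neg P hZ0 hneg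
  simp only [mem_setOf_eq] at hz
  rw [this] at hz
  exact absurd (lt_of_lt_of_le hα hz) (lt_irrefl 0)

lemma VaR_mono (hZ0 : ∀ ω, 0 ≤ Z ω) {α β : ℝ} (h0 : 0 ≤ α) (hαβ : α ≤ β)
    (hne : {z : ℝ | β ≤ (P {ω | Z ω ≤ z}).toReal}.Nonempty) :
    VaR P Z α ≤ VaR P Z β := by
  rcases eq_or_lt_of_le h0 with h0' | h0'
  · rw [VaR_univ_eq P h0'.ge]
    exact VaR_nonneg P hZ0 β
  · exact csInf_le_csInf (VaR_bddBelow P hZ0 h0') hne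
      (fun z hz => le_trans hαβ hz)

lemma atom_zero (hZm : Measurable Z)
    (hZc : Continuous (fun z => (P {ω | Z ω ≤ z}).toReal)) (c : ℝ) :
    (P {ω | Z ω = c}).toReal = 0 := by
  refine le_antisymm ?_ ENNReal.toReal_nonneg
  have key : ∀ ε : ℝ, 0 < ε → (P {ω | Z ω = c}).toReal ≤ ε := by
    intro ε hε
    obtain ⟨δ, hδ, hδ'⟩ := Metric.continuous_iff.mp hZc c ε hε
    set z := c - δ/2 with hzdef
    have hzc : z < c := by simp [hzdef]; positivity
    have hdist : dist z c < δ := by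
      rw [Real.dist_eq]; rw [hzdef]; rw [abs_of_nonpos (by linarith)]; linarith
    have hFF : (P {ω | Z ω ≤ c}).toReal - (P {ω | Z ω ≤ z}).toReal < ε := by
      have := hδ' z hdist
      rw [Real.dist_eq, abs_sub_lt_iff] at this
      linarith [this.2]
    have hsub : {ω | Z ω ≤ z} ∪ {ω | Z ω = c} ⊆ {ω | Z ω ≤ c} := by
      rintro ω (hω | hω)
      · exact le_trans hω hzc.le
      · exact le_of_eq hω
    have hdisj : Disjoint {ω | Z ω ≤ z} {ω | Z ω = c} := by
      rw [Set.disjoint_left]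
      intro ω h1 h2
      simp only [mem_setOf_eq] at h1 h2
      rw [h2] at h1
      exact absurd h1 (not_le.mpr hzc)
    have hmeas := measure_union (μ := P) hdisj (hZm (measurableSet_singleton c))
    have hle : P {ω | Z ω ≤ z} + P {ω | Z ω = c} ≤ P {ω | Z ω ≤ c} := by
      rw [← hmeas]; exact measure_mono hsub
    have := ENNReal.toReal_mono (measure_ne_top P _) hle
    rw [ENNReal.toReal_add (measure_ne_top P _) (measure_ne_top P _)] at this
    linarith
  by_contra hlt
  push_neg at hlt
  have := key ((P {ω | Z ω = c}).toReal / 2) (by linarith)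
  linarith

end Aux

/-- for comonotone non-negative `X, Y` with continuous distributions,
the conditional expectation of `Y` given `X + Y` equals `VaR_{F_{X+Y}(X+Y)}(Y)`
(i.e. `E[Y | X+Y = VaR_α(X+Y)] = VaR_α(Y)` for a.e. `α`), and hence
`E^{Q^{X+Y}_α}[Y] = M_{φ_α}(Y)` where `dQ^{X+Y}_α/dP = φ_α(F_{X+Y}(X+Y))`. -/
theorem stmt_7 {Ω : Type*} [MeasurableSpace Ω] (P : Measure Ω) [IsProbabilityMeasure P]
    (X Y U : Ω → ℝ) (hXm : Measurable X) (hYm : Measurable Y) (hUm : Measurable U)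
    (hX0 : ∀ ω, 0 ≤ X ω) (hY0 : ∀ ω, 0 ≤ Y ω) (hYint : Integrable Y P)
    (hXc : Continuous (fun z => (P {ω | X ω ≤ z}).toReal))
    (hYc : Continuous (fun z => (P {ω | Y ω ≤ z}).toReal))
    (hUunif : ∀ t ∈ Set.Icc (0:ℝ) 1, (P {ω | U ω ≤ t}).toReal = t)
    (hcomX : ∀ ω, X ω = VaR P X (U ω)) (hcomY : ∀ ω, Y ω = VaR P Y (U ω))
    (φ : ℝ → ℝ) (hφ : IsAdmissibleSpectrum φ) :
    (P[Y | MeasurableSpace.comap (fun ω => X ω + Y ω) inferInstance]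
      =ᵐ[P] fun ω => VaR P Y ((P {ω' | X ω' + Y ω' ≤ X ω + Y ω}).toReal)) ∧
    ∫ ω, Y ω * φ ((P {ω' | X ω' + Y ω' ≤ X ω + Y ω}).toReal) ∂P = SRM P φ Y := by
  obtain ⟨hφm, hφ0, hφmono, hφcont, hφint⟩ := hφ
  have hSm : Measurable (fun ω => X ω + Y ω) := hXm.add hYm
  -- monotonicity of VaR on [0,1)
  have hwmono : MonotoneOn (VaR P X) (Ico (0:ℝ) 1) := fun u1 h1 u2 h2 h12 =>
    VaR_mono P hX0 h1.1 h12 (exists_F_ge P hXm h2.2)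
  have hvmono : MonotoneOn (VaR P Y) (Ico (0:ℝ) 1) := fun u1 h1 u2 h2 h12 =>
    VaR_mono P hY0 h1.1 h12 (exists_F_ge P hYm h2.2)
  have hhmono : MonotoneOn (fun u => VaR P X u + VaR P Y u) (Ico (0:ℝ) 1) :=
    hwmono.add hvmono
  -- uniform distribution facts
  have hUof : ∀ t ∈ Icc (0:ℝ) 1, P {ω | U ω ≤ t} = ENNReal.ofReal t := by
    intro t ht
    rw [← ENNReal.ofReal_toReal (measure_ne_top P {ω | U ω ≤ t}), hUunif t ht]
  have hU0 : P {ω | U ω ≤ 0} = 0 := by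
    have := hUof 0 ⟨le_refl 0, zero_le_one⟩
    simpa using this
  have hU1 : P {ω | 1 ≤ U ω} = 0 := by
    have key : ∀ ε : ℝ, 0 < ε → ε ≤ 1 → (P {ω | 1 ≤ U ω}).toReal ≤ ε := by
      intro ε hε hε1
      have hdisj : Disjoint {ω | U ω ≤ 1 - ε} {ω | 1 ≤ U ω} := by
        rw [Set.disjoint_left]
        intro ω h1 h2
        simp only [mem_setOf_eq] at h1 h2
        linarith
      have hmeas := measure_union (μ := P) hdisj (hUm measurableSet_Ici)
      have hle : P {ω | U ω ≤ 1 - ε} + P {ω | 1 ≤ U ω} ≤ 1 := by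
        rw [← hmeas, ← measure_univ (μ := P)]
        exact measure_mono (subset_univ _)
      have h1 := ENNReal.toReal_mono (by simp) hle
      rw [ENNReal.toReal_add (measure_ne_top P _) (measure_ne_top P _),
        ENNReal.toReal_one, hUunif (1 - ε) ⟨by linarith, by linarith⟩] at h1
      linarith
    have h0 : (P {ω | 1 ≤ U ω}).toReal = 0 := by
      refine le_antisymm ?_ ENNReal.toReal_nonneg
      by_contra hlt
      push_neg at hlt
      have := key (min ((P {ω | 1 ≤ U ω}).toReal / 2) 1)
        (lt_min (by linarith) one_pos) (min_le_right _ _)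
      have h2 := min_le_left ((P {ω | 1 ≤ U ω}).toReal / 2) 1
      linarith
    exact (ENNReal.toReal_eq_zero_iff _).mp h0 |>.resolve_right (measure_ne_top P _)
  have hA : ∀ᵐ ω ∂P, U ω ∈ Ioo (0:ℝ) 1 := by
    rw [ae_iff]
    refine measure_mono_null ?_ (measure_union_null hU0 hU1)
    intro ω hω
    simp only [mem_setOf_eq, mem_Ioo, not_and_or, not_lt] at hω
    simpa only [mem_union, mem_setOf_eq] using hω
  -- positive probability of intervals
  have hPI : ∀ u1 u2 : ℝ, 0 ≤ u1 → u1 ≤ u2 → u2 ≤ 1 →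
      u2 - u1 ≤ (P {ω | u1 < U ω ∧ U ω ≤ u2}).toReal := by
    intro u1 u2 h0 h12 h21
    have hsub : {ω | U ω ≤ u2} ⊆ {ω | U ω ≤ u1} ∪ {ω | u1 < U ω ∧ U ω ≤ u2} := by
      intro ω hω
      rcases le_or_gt (U ω) u1 with h | h
      · exact Or.inl h
      · exact Or.inr ⟨h, hω⟩
    have hle := (measure_mono (μ := P) hsub).trans (measure_union_le _ _)
    have h1 := ENNReal.toReal_mono
      (by exact ENNReal.add_ne_top.mpr ⟨measure_ne_top P _, measure_ne_top P _⟩) hle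
    rw [ENNReal.toReal_add (measure_ne_top P _) (measure_ne_top P _),
      hUunif u2 ⟨le_trans h0 h12, h21⟩, hUunif u1 ⟨h0, le_trans h12 h21⟩] at h1
    linarith
  -- strict monotonicity of the quantile of the sum
  have hstrict : ∀ u1 ∈ Ioo (0:ℝ) 1, ∀ u2 ∈ Ioo (0:ℝ) 1, u1 < u2 →
      VaR P X u1 + VaR P Y u1 < VaR P X u2 + VaR P Y u2 := by
    intro u1 h1 u2 h2 h12
    have h1' : u1 ∈ Ico (0:ℝ) 1 := ⟨h1.1.le, h1.2⟩
    have h2' : u2 ∈ Ico (0:ℝ) 1 := ⟨h2.1.le, h2.2⟩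
    rcases lt_or_ge (VaR P X u1 + VaR P Y u1) (VaR P X u2 + VaR P Y u2) with h | h
    · exact h
    have hw12 : VaR P X u1 ≤ VaR P X u2 := hwmono h1' h2' h12.le
    have hv12 : VaR P Y u1 ≤ VaR P Y u2 := hvmono h1' h2' h12.le
    have hweq : VaR P X u1 = VaR P X u2 := by linarith
    exfalso
    have hsub : {ω | u1 < U ω ∧ U ω ≤ u2} ⊆ {ω | X ω = VaR P X u1} := by
      intro ω hω
      simp only [mem_setOf_eq] at hω ⊢
      have hmem : U ω ∈ Ico (0:ℝ) 1 := ⟨le_trans h1.1.le hω.1.le, lt_of_le_of_lt hω.2 h2.2⟩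
      have ha : VaR P X u1 ≤ VaR P X (U ω) := hwmono h1' hmem hω.1.le
      have hb : VaR P X (U ω) ≤ VaR P X u2 := hwmono hmem h2' hω.2
      rw [hcomX ω]
      linarith [hweq ▸ hb]
    have hge := hPI u1 u2 h1.1.le h12.le h2.2.le
    have hmono := ENNReal.toReal_mono (measure_ne_top P _) (measure_mono (μ := P) hsub)
    have hz := atom_zero P hXm hXc (VaR P X u1)
    rw [hz] at hmono
    linarith
  -- the key identity : F_{X+Y}(q_X(u) + q_Y(u)) = u for u ∈ (0,1)
  have hC1 : ∀ u ∈ Ioo (0:ℝ) 1,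
      (P {ω' | X ω' + Y ω' ≤ VaR P X u + VaR P Y u}).toReal = u := by
    intro u hu
    have hu' : u ∈ Ico (0:ℝ) 1 := ⟨hu.1.le, hu.2⟩
    have hae : {ω' | X ω' + Y ω' ≤ VaR P X u + VaR P Y u} =ᵐ[P] {ω' | U ω' ≤ u} := by
      rw [Filter.eventuallyEq_set]
      filter_upwards [hA] with ω hω
      show (X ω + Y ω ≤ VaR P X u + VaR P Y u) ↔ U ω ≤ u
      rw [hcomX ω, hcomY ω]
      constructor
      · intro hle
        by_contra hgt
        push_neg at hgt
        exact absurd hle (not_le.mpr (hstrict u hu (U ω) hω hgt))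
      · intro hle
        exact hhmono ⟨hω.1.le, hω.2⟩ hu' hle
    rw [measure_congr hae, hUunif u ⟨hu.1.le, hu.2.le⟩]
  have hC2 : ∀ᵐ ω ∂P, (P {ω' | X ω' + Y ω' ≤ X ω + Y ω}).toReal = U ω := by
    filter_upwards [hA] with ω hω
    have hSω : X ω + Y ω = VaR P X (U ω) + VaR P Y (U ω) := by
      rw [← hcomX ω, ← hcomY ω]
    rw [hSω]
    exact hC1 (U ω) hω
  -- monotonicity of s ↦ VaR_Y(F_{X+Y}(s))
  have hg : Monotone (fun s => VaR P Y ((P {ω' | X ω' + Y ω' ≤ s}).toReal)) := by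
    intro s t hst
    have hab : (P {ω' | X ω' + Y ω' ≤ s}).toReal ≤ (P {ω' | X ω' + Y ω' ≤ t}).toReal :=
      F_mono P (Z := fun ω => X ω + Y ω) hst
    refine VaR_mono P hY0 ENNReal.toReal_nonneg hab ⟨t, ?_⟩
    show (P {ω' | X ω' + Y ω' ≤ t}).toReal ≤ (P {ω | Y ω ≤ t}).toReal
    refine ENNReal.toReal_mono (measure_ne_top P _) (measure_mono ?_)
    intro ω hω
    simp only [mem_setOf_eq] at hω ⊢
    nlinarith [hX0 ω]
  -- the target function
  have hYtarget : Y =ᵐ[P]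
      (fun ω => VaR P Y ((P {ω' | X ω' + Y ω' ≤ X ω + Y ω}).toReal)) := by
    filter_upwards [hC2] with ω hω
    rw [hω]
    exact hcomY ω
  constructor
  · -- conditional expectation part
    have hm : MeasurableSpace.comap (fun ω => X ω + Y ω) inferInstance ≤ _ := hSm.comap_le
    have hSm' : Measurable[MeasurableSpace.comap (fun ω => X ω + Y ω) inferInstance]
        (fun ω => X ω + Y ω) := fun A hA => ⟨A, hA, rfl⟩
    have htm : Measurable[MeasurableSpace.comap (fun ω => X ω + Y ω) inferInstance]
        (fun ω => VaR P Y ((P {ω' | X ω' + Y ω' ≤ X ω + Y ω}).toReal)) :=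
      hg.measurable.comp hSm'
    have h2 := condExp_of_stronglyMeasurable hm htm.stronglyMeasurable
      (hYint.congr hYtarget)
    have h3 := condExp_congr_ae (m := MeasurableSpace.comap (fun ω => X ω + Y ω) inferInstance) (μ := P) hYtarget
    rw [h2] at h3
    exact h3
  · -- integral part
    have hstep1 : ∫ ω, Y ω * φ ((P {ω' | X ω' + Y ω' ≤ X ω + Y ω}).toReal) ∂P
        = ∫ ω, VaR P Y (U ω) * φ (U ω) ∂P := by
      refine integral_congr_ae ?_
      filter_upwards [hC2] with ω hω
      rw [hω, ← hcomY ω]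
    haveI := Measure.isProbabilityMeasure_map (μ := P) hUm.aemeasurable
    have hmap : Measure.map U P = volume.restrict (Ioo 0 1) := by
      refine Measure.ext_of_Iic (Measure.map U P) _ (fun a => ?_)
      rw [Measure.map_apply hUm measurableSet_Iic, Measure.restrict_apply measurableSet_Iic]
      have hpre : U ⁻¹' Iic a = {ω | U ω ≤ a} := rfl
      rw [hpre]
      rcases le_or_gt a 0 with ha | ha
      · have h1 : P {ω | U ω ≤ a} ≤ P {ω | U ω ≤ 0} :=
          measure_mono (fun ω hω => le_trans hω ha)
        rw [hU0] at h1
        have h2 : Iic a ∩ Ioo (0:ℝ) 1 = ∅ := by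
          ext x
          simp only [mem_inter_iff, mem_Iic, mem_Ioo, mem_empty_iff_false, iff_false, not_and]
          intro h1' h2'
          intro h3'
          linarith
        rw [h2, le_antisymm h1 zero_le]
        simp
      rcases le_or_gt a 1 with ha1 | ha1
      · rw [hUof a ⟨ha.le, ha1⟩]
        refine le_antisymm ?_ ?_
        · have : ENNReal.ofReal a = volume (Ioo (0:ℝ) a) := by
            rw [Real.volume_Ioo, sub_zero]
          rw [this]
          refine measure_mono ?_
          intro x hx
          exact ⟨hx.2.le, hx.1, lt_of_lt_of_le hx.2 ha1⟩
        · have : volume (Iic a ∩ Ioo (0:ℝ) 1) ≤ volume (Ioc (0:ℝ) a) := by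
            refine measure_mono ?_
            intro x hx
            exact ⟨hx.2.1, hx.1⟩
          rw [Real.volume_Ioc, sub_zero] at this
          exact this
      · have hL : P {ω | U ω ≤ a} = 1 := by
          refine le_antisymm prob_le_one ?_
          have h1 : P {ω | U ω ≤ 1} ≤ P {ω | U ω ≤ a} :=
            measure_mono (fun ω hω => le_trans hω ha1.le)
          rw [hUof 1 ⟨zero_le_one, le_refl 1⟩, ENNReal.ofReal_one] at h1
          exact h1
        have h2 : Iic a ∩ Ioo (0:ℝ) 1 = Ioo (0:ℝ) 1 := by
          refine inter_eq_self_of_subset_right ?_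
          intro x hx
          exact le_trans hx.2.le ha1.le
        rw [hL, h2, Real.volume_Ioo, sub_zero, ENNReal.ofReal_one]
    have hvmonoIoo : MonotoneOn (VaR P Y) (Ioo (0:ℝ) 1) := fun u1 h1 u2 h2 h12 =>
      hvmono ⟨h1.1.le, h1.2⟩ ⟨h2.1.le, h2.2⟩ h12
    have hψ : AEStronglyMeasurable (fun u => VaR P Y u * φ u) (Measure.map U P) := by
      rw [hmap]
      exact ((aemeasurable_restrict_of_monotoneOn measurableSet_Ioo hvmonoIoo).mul
        (hφm.aemeasurable.restrict)).aestronglyMeasurable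
    have hstep2 := integral_map (μ := P) hUm.aemeasurable hψ
    rw [hstep1, ← hstep2, hmap]
    rfl
end

section
/- Let $f, \bar{f}: (0,1) \to (0,\infty)$ be integrable with $f(\alpha)/\bar{f}(\alpha) \to 1$ as $\alpha \to 1$, and let $(\phi_\alpha)$ be a family of admissible spectra with $\phi_\alpha(u) \to 0$ for each $u \in [0,1)$. Set $\bar{M}(\alpha) = \int_0^1 \bar{f}(u)\phi_\alpha(u)\,du$ and assume $\liminf_{\alpha\to 1}\bar{M}(\alpha) > 0$. Then $\int_0^1 f(u)\phi_\alpha(u)\,du \sim \bar{M}(\alpha)$ as $\alpha \to 1$, i.e. their ratio tends to 1. -/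
open MeasureTheory Filter Set
open scoped Topology

/-! The error `∫ f φ_α - M̄(α)` is at most `∫ |f - f̄| φ_α`; split this at a point `δ < 1`.
On `(δ, 1)` the ratio `f / f̄` is within `ε` of `1`, so that piece is at most `ε M̄(α)`.
On `(0, δ]` monotonicity of `φ_α` bounds it by `φ_α(δ) ∫ |f - f̄|`, which tends to `0`.
Since `M̄(α)` stays away from `0`, the relative error of `∫ f φ_α` against `M̄(α)` is eventually
below any `ε`. -/

theorem tendsto_div_nhds_one_of_abs_sub_le {ι : Type*} {l : Filter ι} {g G : ι → ℝ} {c : ℝ}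
    (hc : 0 < c) (hG : ∀ᶠ x in l, c ≤ G x)
    (h : ∀ ε > 0, ∃ r : ι → ℝ, Tendsto r l (𝓝 0) ∧ ∀ᶠ x in l, |g x - G x| ≤ r x + ε * G x) :
    Tendsto (fun x => g x / G x) l (𝓝 1) := by
  rw [Metric.tendsto_nhds]
  intro ε hε
  obtain ⟨r, hr, hbound⟩ := h (ε / 2) (half_pos hε)
  filter_upwards [hG, hbound, hr.eventually (gt_mem_nhds (by positivity : 0 < ε / 2 * c))]
    with x hGx hx hrx
  have hGpos : 0 < G x := hc.trans_le hGx
  rw [Real.dist_eq, div_sub_one hGpos.ne', abs_div, abs_of_pos hGpos, div_lt_iff₀ hGpos]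
  have := mul_le_mul_of_nonneg_left hGx (half_pos hε).le
  linarith

theorem exists_abs_sub_le_mul_of_tendsto_div {f g : ℝ → ℝ} {a b ε : ℝ} (hab : a < b)
    (hg : ∀ u ∈ Ioo a b, 0 < g u) (hfg : Tendsto (fun u => f u / g u) (𝓝[<] b) (𝓝 1))
    (hε : 0 < ε) : ∃ δ ∈ Ioo a b, ∀ u ∈ Ioo δ b, |f u - g u| ≤ ε * g u := by
  have hclose : ∀ᶠ u in 𝓝[<] b, |f u / g u - 1| ≤ ε :=
    hfg.eventually (Metric.closedBall_mem_nhds 1 hε)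
  obtain ⟨δ, hδ, hsub⟩ :=
    (mem_nhdsLT_iff_exists_mem_Ico_Ioo_subset (add_div_two_lt_right.2 hab)).1 hclose
  have hδ_gt : a < δ := (left_lt_add_div_two.2 hab).trans_le hδ.1
  refine ⟨δ, ⟨hδ_gt, hδ.2⟩, fun u hu => ?_⟩
  have hgu : 0 < g u := hg u ⟨hδ_gt.trans hu.1, hu.2⟩
  calc |f u - g u| = |(f u / g u - 1) * g u| := by rw [sub_one_mul, div_mul_cancel₀ _ hgu.ne']
    _ = |f u / g u - 1| * g u := by rw [abs_mul, abs_of_pos hgu]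
    _ ≤ ε * g u := mul_le_mul_of_nonneg_right (hsub hu) hgu.le

section WeightedIntegral

variable {μ : Measure ℝ} {f g ψ : ℝ → ℝ}

theorem abs_setIntegral_mul_sub_setIntegral_mul_le {s : Set ℝ} (hs : MeasurableSet s)
    (hfψ : IntegrableOn (fun u => f u * ψ u) s μ) (hgψ : IntegrableOn (fun u => g u * ψ u) s μ)
    (hψ : ∀ u ∈ s, 0 ≤ ψ u) :
    |∫ u in s, f u * ψ u ∂μ - ∫ u in s, g u * ψ u ∂μ| ≤ ∫ u in s, |f u - g u| * ψ u ∂μ := by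
  rw [← integral_sub hfψ hgψ]
  refine abs_integral_le_integral_abs.trans_eq (setIntegral_congr_fun hs fun u hu => ?_)
  rw [← sub_mul, abs_mul, abs_of_nonneg (hψ u hu)]

theorem setIntegral_mul_le_mul_setIntegral {s : Set ℝ} {M : ℝ} (hs : MeasurableSet s)
    (hf : IntegrableOn f s μ) (hfψ : IntegrableOn (fun u => f u * ψ u) s μ)
    (hf_nonneg : ∀ u ∈ s, 0 ≤ f u) (hψ : ∀ u ∈ s, ψ u ≤ M) :
    ∫ u in s, f u * ψ u ∂μ ≤ M * ∫ u in s, f u ∂μ := by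
  rw [← integral_const_mul]
  refine setIntegral_mono_on hfψ (hf.const_mul M) hs fun u hu => ?_
  rw [mul_comm M]
  exact mul_le_mul_of_nonneg_left (hψ u hu) (hf_nonneg u hu)

theorem setIntegral_le_setIntegral_of_subset {s t : Set ℝ} (ht : MeasurableSet t) (hst : s ⊆ t)
    (hf : IntegrableOn f t μ) (hf_nonneg : ∀ u ∈ t, 0 ≤ f u) :
    ∫ u in s, f u ∂μ ≤ ∫ u in t, f u ∂μ :=
  setIntegral_mono_set hf ((ae_restrict_iff' ht).2 (ae_of_all _ hf_nonneg)) hst.eventuallyLE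

theorem abs_setIntegral_mul_sub_setIntegral_mul_le_of_monotoneOn {a b δ ε : ℝ}
    (hδ : δ ∈ Ioo a b) (hε : 0 ≤ ε) (hf : IntegrableOn f (Ioo a b) μ)
    (hg : IntegrableOn g (Ioo a b) μ) (hfψ : IntegrableOn (fun u => f u * ψ u) (Ioo a b) μ)
    (hgψ : IntegrableOn (fun u => g u * ψ u) (Ioo a b) μ) (hg_nonneg : ∀ u ∈ Ioo a b, 0 ≤ g u)
    (hψ_nonneg : ∀ u ∈ Ioo a b, 0 ≤ ψ u) (hψ : MonotoneOn ψ (Ioo a b))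
    (hfg : ∀ u ∈ Ioo δ b, |f u - g u| ≤ ε * g u) :
    |∫ u in Ioo a b, f u * ψ u ∂μ - ∫ u in Ioo a b, g u * ψ u ∂μ| ≤
      ψ δ * ∫ u in Ioo a b, |f u - g u| ∂μ + ε * ∫ u in Ioo a b, g u * ψ u ∂μ := by
  have hsplit : Ioc a δ ∪ Ioo δ b = Ioo a b := Ioc_union_Ioo_eq_Ioo hδ.1.le hδ.2
  have hlow : Ioc a δ ⊆ Ioo a b := hsplit ▸ subset_union_left
  have hhigh : Ioo δ b ⊆ Ioo a b := hsplit ▸ subset_union_right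
  have hdiff : IntegrableOn (fun u => |f u - g u|) (Ioo a b) μ := (hf.sub hg).abs
  have hdiffψ : IntegrableOn (fun u => |f u - g u| * ψ u) (Ioo a b) μ :=
    IntegrableOn.congr_fun (hfψ.sub hgψ).abs (fun u hu => by
      simp only [Pi.sub_apply, ← sub_mul, abs_mul, abs_of_nonneg (hψ_nonneg u hu)])
      measurableSet_Ioo
  have hlow_bound : ∫ u in Ioc a δ, |f u - g u| * ψ u ∂μ ≤ ψ δ * ∫ u in Ioo a b, |f u - g u| ∂μ :=
    calc ∫ u in Ioc a δ, |f u - g u| * ψ u ∂μ ≤ ψ δ * ∫ u in Ioc a δ, |f u - g u| ∂μ :=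
          setIntegral_mul_le_mul_setIntegral measurableSet_Ioc (hdiff.mono_set hlow)
            (hdiffψ.mono_set hlow) (fun u _ => abs_nonneg _)
            (fun u hu => hψ (hlow hu) (hlow ⟨hu.1.trans_le hu.2, le_rfl⟩) hu.2)
      _ ≤ ψ δ * ∫ u in Ioo a b, |f u - g u| ∂μ :=
          mul_le_mul_of_nonneg_left (setIntegral_le_setIntegral_of_subset measurableSet_Ioo hlow
            hdiff fun u _ => abs_nonneg _) (hψ_nonneg δ hδ)
  have hhigh_bound : ∫ u in Ioo δ b, |f u - g u| * ψ u ∂μ ≤ ε * ∫ u in Ioo a b, g u * ψ u ∂μ :=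
    calc ∫ u in Ioo δ b, |f u - g u| * ψ u ∂μ ≤ ∫ u in Ioo δ b, ε * (g u * ψ u) ∂μ :=
          setIntegral_mono_on (hdiffψ.mono_set hhigh) ((hgψ.mono_set hhigh).const_mul ε)
            measurableSet_Ioo fun u hu => by
              rw [← mul_assoc]
              exact mul_le_mul_of_nonneg_right (hfg u hu) (hψ_nonneg u (hhigh hu))
      _ ≤ ε * ∫ u in Ioo a b, g u * ψ u ∂μ := by
          rw [integral_const_mul]
          exact mul_le_mul_of_nonneg_left (setIntegral_le_setIntegral_of_subset measurableSet_Ioo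
            hhigh hgψ fun u hu => mul_nonneg (hg_nonneg u hu) (hψ_nonneg u hu)) hε
  calc |∫ u in Ioo a b, f u * ψ u ∂μ - ∫ u in Ioo a b, g u * ψ u ∂μ|
      ≤ ∫ u in Ioo a b, |f u - g u| * ψ u ∂μ :=
        abs_setIntegral_mul_sub_setIntegral_mul_le measurableSet_Ioo hfψ hgψ hψ_nonneg
    _ = ∫ u in Ioc a δ, |f u - g u| * ψ u ∂μ + ∫ u in Ioo δ b, |f u - g u| * ψ u ∂μ := by
        rw [← setIntegral_union (Ioc_disjoint_Ioi_same.mono_right Ioo_subset_Ioi_self) measurableSet_Ioo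
          (hdiffψ.mono_set hlow) (hdiffψ.mono_set hhigh), hsplit]
    _ ≤ _ := add_le_add hlow_bound hhigh_bound

end WeightedIntegral

theorem IsAdmissibleSpectrum.integrableOn_mul {φ h : ℝ → ℝ} {C : ℝ} (hφ : IsAdmissibleSpectrum φ)
    (hC : ∀ u ∈ Ico (0:ℝ) 1, φ u ≤ C) (hh : IntegrableOn h (Ioo 0 1)) :
    IntegrableOn (fun u => h u * φ u) (Ioo 0 1) :=
  Integrable.mul_bdd hh hφ.1.aestronglyMeasurable <|
    (ae_restrict_iff' measurableSet_Ioo).2 <| ae_of_all _ fun u hu => by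
      rw [Real.norm_of_nonneg (hφ.2.1 u (Ioo_subset_Ico_self hu))]
      exact hC u (Ioo_subset_Ico_self hu)

theorem stmt_11_general (f fbar : ℝ → ℝ)
    (hfint : IntegrableOn f (Set.Ioo 0 1)) (hfbarint : IntegrableOn fbar (Set.Ioo 0 1))
    (hfbarpos : ∀ u ∈ Set.Ioo (0:ℝ) 1, 0 < fbar u)
    (hratio : Tendsto (fun α => f α / fbar α) (𝓝[<] (1:ℝ)) (𝓝 1))
    (φ : ℝ → ℝ → ℝ)
    (hφ : ∀ α ∈ Set.Ioo (0:ℝ) 1, IsAdmissibleSpectrum (φ α))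
    (hbdd : ∀ α ∈ Set.Ioo (0:ℝ) 1, ∃ C : ℝ, ∀ u ∈ Set.Ico (0:ℝ) 1, φ α u ≤ C)
    (hconv : ∀ u ∈ Set.Ico (0:ℝ) 1,
      Tendsto (fun α => φ α u) (𝓝[<] (1:ℝ)) (𝓝 0))
    (hM : ∃ c > (0:ℝ), ∀ᶠ α in 𝓝[<] (1:ℝ),
      c ≤ ∫ u in Set.Ioo (0:ℝ) 1, fbar u * φ α u) :
    Tendsto (fun α => (∫ u in Set.Ioo (0:ℝ) 1, f u * φ α u) /
        ∫ u in Set.Ioo (0:ℝ) 1, fbar u * φ α u)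
      (𝓝[<] (1:ℝ)) (𝓝 1) := by
  obtain ⟨c, hc, hMc⟩ := hM
  refine tendsto_div_nhds_one_of_abs_sub_le hc hMc fun ε hε => ?_
  obtain ⟨δ, hδ, hclose⟩ := exists_abs_sub_le_mul_of_tendsto_div zero_lt_one hfbarpos hratio hε
  refine ⟨fun α => φ α δ * ∫ u in Ioo (0:ℝ) 1, |f u - fbar u|, ?_, ?_⟩
  · simpa using (hconv δ (Ioo_subset_Ico_self hδ)).mul_const (∫ u in Ioo (0:ℝ) 1, |f u - fbar u|)
  filter_upwards [Ioo_mem_nhdsLT zero_lt_one] with α hα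
  obtain ⟨C, hC⟩ := hbdd α hα
  exact abs_setIntegral_mul_sub_setIntegral_mul_le_of_monotoneOn hδ hε.le hfint hfbarint
    ((hφ α hα).integrableOn_mul hC hfint) ((hφ α hα).integrableOn_mul hC hfbarint)
    (fun u hu => (hfbarpos u hu).le) (fun u hu => (hφ α hα).2.1 u (Ioo_subset_Ico_self hu))
    ((hφ α hα).2.2.1.mono Ioo_subset_Ico_self) hclose

/-- if `f, f̄ : (0,1) → (0,∞)` are integrable with `f/f̄ → 1` at `1⁻`,
the admissible spectra `φ_α` (bounded on `[0,1)`) converge pointwise to `0` on `[0,1)`,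
and `M̄(α) = ∫_0^1 f̄ φ_α` has positive liminf at `1⁻`, then
`∫_0^1 f φ_α ∼ M̄(α)` as `α → 1⁻`. -/
theorem stmt_11 (f fbar : ℝ → ℝ)
    (hfint : IntegrableOn f (Set.Ioo 0 1)) (hfbarint : IntegrableOn fbar (Set.Ioo 0 1))
    (hfpos : ∀ u ∈ Set.Ioo (0:ℝ) 1, 0 < f u)
    (hfbarpos : ∀ u ∈ Set.Ioo (0:ℝ) 1, 0 < fbar u)
    (hratio : Tendsto (fun α => f α / fbar α) (𝓝[<] (1:ℝ)) (𝓝 1))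
    (φ : ℝ → ℝ → ℝ)
    (hφ : ∀ α ∈ Set.Ioo (0:ℝ) 1, IsAdmissibleSpectrum (φ α))
    (hbdd : ∀ α ∈ Set.Ioo (0:ℝ) 1, ∃ C : ℝ, ∀ u ∈ Set.Ico (0:ℝ) 1, φ α u ≤ C)
    (hconv : ∀ u ∈ Set.Ico (0:ℝ) 1,
      Tendsto (fun α => φ α u) (𝓝[<] (1:ℝ)) (𝓝 0))
    (hM : ∃ c > (0:ℝ), ∀ᶠ α in 𝓝[<] (1:ℝ),
      c ≤ ∫ u in Set.Ioo (0:ℝ) 1, fbar u * φ α u) :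
    Tendsto (fun α => (∫ u in Set.Ioo (0:ℝ) 1, f u * φ α u) /
        ∫ u in Set.Ioo (0:ℝ) 1, fbar u * φ α u)
      (𝓝[<] (1:ℝ)) (𝓝 1) :=
  stmt_11_general f fbar hfint hfbarint hfbarpos hratio φ hφ hbdd hconv hM
end

section
/- Let $X, Y$ be independent non-negative random variables with positive, continuous, ultimately decreasing density functions $f_X, f_Y$ on $[0,\infty)$, where $f_X$ (resp. $f_Y$) is regularly varying with index $-\beta - 1$ (resp. $-\gamma - 1$), $\beta, \gamma > 0$. Then the density $f_{X+Y}(z) = \int_0^z f_X(z-y) f_Y(y)\,dy$ of $Z = X+Y$ satisfies $f_Z(z) \sim f_X(z) + f_Y(z)$ as $z \to \infty$, and $f_Z$ is regularly varying with index $-\min\{\beta,\gamma\} - 1$. -/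
open MeasureTheory Filter Set
open scoped Topology

def RegularlyVarying (f : ℝ → ℝ) (k : ℝ) : Prop :=
  ∀ t > (0:ℝ), Tendsto (fun x => f (t * x) / f x) atTop (𝓝 (t ^ k))

def UltimatelyDecreasing (f : ℝ → ℝ) : Prop :=
  ∃ x₂ : ℝ, AntitoneOn f (Set.Ici x₂)

/-! ### Auxiliary lemmas -/

/-- A positive, ultimately decreasing, regularly varying function is long-tailed:
`f(z - y)/f(z) → 1` for every fixed `y ≥ 0`. -/
lemma long_tailed (f : ℝ → ℝ) (k : ℝ) (X₀ : ℝ) (hX₀ : 0 ≤ X₀)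
    (hfpos : ∀ x ≥ (0:ℝ), 0 < f x) (hanti : AntitoneOn f (Set.Ici X₀))
    (hfrv : RegularlyVarying f k) (y : ℝ) (hy : 0 ≤ y) :
    Tendsto (fun z => f (z - y) / f z) atTop (𝓝 1) := by
  rw [Metric.tendsto_nhds]
  intro ε hε
  -- choose t ∈ (0,1) with t ^ k < 1 + ε
  have hcont : ContinuousAt (fun t : ℝ => t ^ k) 1 :=
    Real.continuousAt_rpow_const 1 k (Or.inl one_ne_zero)
  have h1 : (1:ℝ) ^ k < 1 + ε := by
    rw [Real.one_rpow]; linarith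
  have := hcont.eventually_lt_const h1
  obtain ⟨δ, hδ, hδ'⟩ := Metric.eventually_nhds_iff.mp this
  set t : ℝ := 1 - min δ 1 / 2 with ht_def
  have ht0 : 0 < t := by
    have : min δ 1 ≤ 1 := min_le_right _ _
    simp only [ht_def]; linarith
  have ht1 : t < 1 := by
    have : 0 < min δ 1 := lt_min hδ one_pos
    simp only [ht_def]; linarith
  have htk : t ^ k < 1 + ε := by
    apply hδ'
    have : 0 < min δ 1 := lt_min hδ one_pos
    have hmin : min δ 1 ≤ δ := min_le_left _ _
    rw [Real.dist_eq]
    simp only [ht_def]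
    rw [abs_of_nonpos (by linarith)]
    linarith
  have hrv := (hfrv t ht0).eventually_lt_const htk
  have hz1 : ∀ᶠ z in atTop, y / (1 - t) ≤ z := eventually_ge_atTop _
  have hz2 : ∀ᶠ z in atTop, X₀ / t ≤ z := eventually_ge_atTop _
  have hz3 : ∀ᶠ z in atTop, X₀ + y ≤ z := eventually_ge_atTop _
  filter_upwards [hrv, hz1, hz2, hz3] with z h1z h2z h3z h4z
  have hzy : X₀ ≤ z - y := by linarith
  have hz0 : (0:ℝ) ≤ z := by linarith
  have htz : X₀ ≤ t * z := by
    rw [div_le_iff₀ (by linarith)] at h3z; linarith [h3z]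
  have htzle : t * z ≤ z - y := by
    rw [div_le_iff₀ (by linarith : (0:ℝ) < 1 - t)] at h2z
    nlinarith
  have hfz : 0 < f z := hfpos z hz0
  have hlow : f z ≤ f (z - y) := hanti hzy (by linarith : X₀ ≤ z) (by linarith)
  have hup : f (z - y) ≤ f (t * z) := hanti htz hzy htzle
  have hub : f (z - y) / f z < 1 + ε := by
    calc f (z - y) / f z ≤ f (t * z) / f z := by
          gcongr
      _ < 1 + ε := h1z
  have hlb : 1 ≤ f (z - y) / f z := (one_le_div hfz).mpr hlow
  rw [Real.dist_eq, abs_of_nonneg (by linarith)]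
  linarith

/-- The half-line part of the convolution is asymptotically `f(z)`. -/
lemma conv_half (f g : ℝ → ℝ) (k : ℝ) (X₀ : ℝ) (hX₀ : 0 ≤ X₀)
    (hfpos : ∀ x ≥ (0:ℝ), 0 < f x) (hgpos : ∀ x ≥ (0:ℝ), 0 < g x)
    (hfc : ContinuousOn f (Set.Ici 0)) (hgc : ContinuousOn g (Set.Ici 0))
    (hanti : AntitoneOn f (Set.Ici X₀))
    (hfrv : RegularlyVarying f k)
    (hgone : ∫ y in Set.Ioi (0:ℝ), g y = 1) :
    Tendsto (fun z => (∫ y in (0:ℝ)..(z/2), f (z - y) * g y) / f z) atTop (𝓝 1) := by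
  have hgint : IntegrableOn g (Set.Ioi (0:ℝ)) := by
    by_contra h
    rw [integral_undef h] at hgone
    norm_num at hgone
  have hhalf := hfrv (1/2) (by norm_num)
  set L : ℝ := (1/2 : ℝ) ^ k with hL
  have hLpos : 0 < L := Real.rpow_pos_of_pos (by norm_num) k
  set C : ℝ := L + 1 with hC
  have hCpos : 0 < C := by positivity
  set F : ℝ → ℝ → ℝ := fun z => (Set.Ioc 0 (z/2)).indicator (fun y => f (z - y) * g y / f z)
    with hF
  have key : Tendsto (fun z => ∫ y in Set.Ioi (0:ℝ), F z y) atTop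
      (𝓝 (∫ y in Set.Ioi (0:ℝ), g y)) := by
    apply tendsto_integral_filter_of_dominated_convergence (bound := fun y => C * g y)
    · filter_upwards [eventually_ge_atTop (0:ℝ)] with z hz
      apply AEStronglyMeasurable.restrict
      rw [aestronglyMeasurable_indicator_iff measurableSet_Ioc]
      apply ContinuousOn.aestronglyMeasurable _ measurableSet_Ioc
      apply ContinuousOn.div_const
      apply ContinuousOn.mul
      · apply hfc.comp (continuous_const.sub continuous_id).continuousOn
        intro y hy
        simp only [mem_Ioc] at hy
        simp only [mem_Ici, id_eq, Pi.sub_apply]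
        have : y ≤ z / 2 := hy.2
        linarith
      · exact hgc.mono (fun y hy => le_of_lt hy.1)
    · have hev1 : ∀ᶠ z in atTop, f (z/2) / f z < C := by
        have h2 : Tendsto (fun z => f (z/2) / f z) atTop (𝓝 L) := by
          apply hhalf.congr'
          filter_upwards with z
          have : (1/2:ℝ) * z = z/2 := by ring
          rw [this]
        exact h2.eventually_lt_const (by simp only [hC]; linarith)
      filter_upwards [hev1, eventually_ge_atTop (2 * X₀), eventually_ge_atTop (0:ℝ)]
        with z hz1 hz2 hz3
      apply ae_restrict_of_forall_mem measurableSet_Ioi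
      intro y hy
      simp only [mem_Ioi] at hy
      by_cases hyz : y ∈ Set.Ioc 0 (z/2)
      · rw [hF]
        simp only [indicator_of_mem hyz]
        have hy2 : y ≤ z / 2 := hyz.2
        have hfz : 0 < f z := hfpos z hz3
        have hgy : 0 < g y := hgpos y hy.le
        have hfzy : 0 < f (z - y) := hfpos _ (by linarith)
        rw [Real.norm_eq_abs,
          abs_of_nonneg (div_nonneg (mul_nonneg hfzy.le hgy.le) hfz.le)]
        have hmono : f (z - y) ≤ f (z/2) :=
          hanti (by simp only [mem_Ici]; linarith) (by simp only [mem_Ici]; linarith)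
            (by linarith)
        calc f (z - y) * g y / f z ≤ f (z/2) * g y / f z := by gcongr
          _ = f (z/2) / f z * g y := by ring
          _ ≤ C * g y := mul_le_mul_of_nonneg_right hz1.le hgy.le
      · rw [hF]
        simp only [indicator_of_notMem hyz]
        rw [norm_zero]
        exact mul_nonneg hCpos.le (hgpos y hy.le).le
    · exact hgint.const_mul C
    · apply ae_restrict_of_forall_mem measurableSet_Ioi
      intro y hy
      simp only [mem_Ioi] at hy
      have hrat : Tendsto (fun z => f (z - y) / f z) atTop (𝓝 1) :=
        long_tailed f k X₀ hX₀ hfpos hanti hfrv y hy.le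
      have : Tendsto (fun z => f (z - y) / f z * g y) atTop (𝓝 (1 * g y)) :=
        hrat.mul_const _
      rw [one_mul] at this
      apply this.congr'
      filter_upwards [eventually_ge_atTop (2 * y)] with z hz
      rw [hF]
      have : y ∈ Set.Ioc 0 (z/2) := ⟨hy, by linarith⟩
      simp only [indicator_of_mem this]
      ring
  rw [hgone] at key
  apply key.congr'
  filter_upwards [eventually_ge_atTop (0:ℝ)] with z hz
  rw [hF]
  rw [setIntegral_indicator measurableSet_Ioc]
  have h1 : Set.Ioi (0:ℝ) ∩ Set.Ioc 0 (z/2) = Set.Ioc 0 (z/2) := by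
    rw [inter_eq_right]
    exact fun y hy => hy.1
  rw [h1, intervalIntegral.integral_of_le (by linarith : (0:ℝ) ≤ z/2)]
  rw [integral_div]

/-- Splitting the convolution integral at `z/2` and reflecting the upper half. -/
lemma split_conv (fX fY : ℝ → ℝ)
    (hXc : ContinuousOn fX (Set.Ici 0)) (hYc : ContinuousOn fY (Set.Ici 0))
    (z : ℝ) (hz : 0 ≤ z) :
    (∫ y in (0:ℝ)..z, fX (z - y) * fY y) =
      (∫ y in (0:ℝ)..(z/2), fX (z - y) * fY y) +
      (∫ y in (0:ℝ)..(z/2), fY (z - y) * fX y) := by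
  have hcont : ContinuousOn (fun y => fX (z - y) * fY y) (Set.Icc 0 z) := by
    apply ContinuousOn.mul
    · apply hXc.comp (continuous_const.sub continuous_id).continuousOn
      intro y hy
      simp only [mem_Icc] at hy
      simp only [mem_Ici, id_eq, Pi.sub_apply]
      linarith
    · exact hYc.mono (fun y hy => hy.1)
  have hi1 : IntervalIntegrable (fun y => fX (z - y) * fY y) volume 0 (z/2) :=
    (hcont.mono (Set.Icc_subset_Icc le_rfl (by linarith))).intervalIntegrable_of_Icc
      (by linarith)
  have hi2 : IntervalIntegrable (fun y => fX (z - y) * fY y) volume (z/2) z := by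
    apply ContinuousOn.intervalIntegrable
    apply hcont.mono
    rw [Set.uIcc_of_le (by linarith : z/2 ≤ z)]
    exact Set.Icc_subset_Icc (by linarith) le_rfl
  have hsplit := intervalIntegral.integral_add_adjacent_intervals hi1 hi2
  rw [← hsplit]
  congr 1
  have := intervalIntegral.integral_comp_sub_left (a := z/2) (b := z)
    (fun u => fX u * fY (z - u)) z
  have heq : ∀ y : ℝ, fX (z - y) * fY (z - (z - y)) = fX (z - y) * fY y := by
    intro y; congr 1; congr 1; ring
  simp only [heq] at this
  rw [this]
  have h0 : z - z = 0 := by ring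
  have h2 : z - z/2 = z/2 := by ring
  rw [h0, h2]
  apply intervalIntegral.integral_congr
  intro u _
  ring

/-- A positive continuous function on `[0,∞)` whose ratio `u(2x)/u(x)` tends to a
limit `c < 1` must tend to `0`. -/
lemma ratio_to_zero (u : ℝ → ℝ) (hupos : ∀ x ≥ (0:ℝ), 0 < u x)
    (huc : ContinuousOn u (Set.Ici 0)) (c : ℝ) (hc : c < 1)
    (hlim : Tendsto (fun x => u (2 * x) / u x) atTop (𝓝 c)) :
    Tendsto u atTop (𝓝 0) := by
  have hc0 : 0 ≤ c := by
    have : ∀ᶠ x in atTop, 0 ≤ u (2 * x) / u x := by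
      filter_upwards [eventually_ge_atTop (0:ℝ)] with x hx
      exact div_nonneg (hupos _ (by linarith)).le (hupos _ hx).le
    exact le_of_tendsto_of_tendsto tendsto_const_nhds hlim this
  set r : ℝ := (c + 1) / 2 with hr
  have hr0 : 0 < r := by simp only [hr]; linarith
  have hr1 : r < 1 := by simp only [hr]; linarith
  have hev : ∀ᶠ x in atTop, u (2 * x) / u x < r :=
    hlim.eventually_lt_const (by simp only [hr]; linarith)
  obtain ⟨X₁, hX₁⟩ := eventually_atTop.mp hev
  set X : ℝ := max X₁ 1 with hX
  have hXpos : (0:ℝ) < X := lt_of_lt_of_le one_pos (le_max_right _ _)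
  have hstep : ∀ x ≥ X, u (2 * x) ≤ r * u x := by
    intro x hx
    have h1 : u (2 * x) / u x < r := hX₁ x (le_trans (le_max_left _ _) hx)
    have h2 : 0 < u x := hupos x (by linarith)
    rw [div_lt_iff₀ h2] at h1
    linarith
  obtain ⟨M, hM⟩ : ∃ M, ∀ x ∈ Set.Icc X (2 * X), u x ≤ M := by
    obtain ⟨xm, _, hxm⟩ := (isCompact_Icc (a := X) (b := 2*X)).exists_isMaxOn
      (Set.nonempty_Icc.mpr (by linarith))
      (huc.mono (fun x hx => le_trans hXpos.le hx.1))
    exact ⟨u xm, fun x hx => hxm hx⟩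
  have hMpos : 0 < M := lt_of_lt_of_le (hupos X hXpos.le) (hM X ⟨le_rfl, by linarith⟩)
  have hbdd : ∀ n : ℕ, ∀ x, X ≤ x → x ≤ 2 ^ (n+1) * X → u x ≤ M := by
    intro n
    induction n with
    | zero => intro x hx1 hx2; exact hM x ⟨hx1, by rw [pow_one] at hx2; exact hx2⟩
    | succ n ih =>
      intro x hx1 hx2
      by_cases h : x ≤ 2 * X
      · exact hM x ⟨hx1, h⟩
      · push_neg at h
        have hx2' : x / 2 ≤ 2 ^ (n+1) * X := by
          rw [div_le_iff₀ (by norm_num : (0:ℝ) < 2)]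
          calc x ≤ 2 ^ (n+2) * X := hx2
            _ = 2 ^ (n+1) * X * 2 := by ring
        have hx1' : X ≤ x / 2 := by linarith
        have := hstep (x/2) hx1'
        have h2 : 2 * (x/2) = x := by ring
        rw [h2] at this
        calc u x ≤ r * u (x/2) := this
          _ ≤ 1 * M := mul_le_mul hr1.le (ih _ hx1' hx2') (hupos _ (by linarith)).le one_pos.le
          _ = M := one_mul M
  have hbdd' : ∀ x ≥ X, u x ≤ M := by
    intro x hx
    obtain ⟨n, hn⟩ := pow_unbounded_of_one_lt (x / X) (by norm_num : (1:ℝ) < 2)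
    apply hbdd n x hx
    rw [div_lt_iff₀ hXpos] at hn
    calc x ≤ 2 ^ n * X := hn.le
      _ ≤ 2 ^ (n+1) * X := by
        apply mul_le_mul_of_nonneg_right _ hXpos.le
        exact pow_le_pow_right₀ (by norm_num) (Nat.le_succ n)
  have hdecay : ∀ n : ℕ, ∀ x, 2 ^ n * X ≤ x → u x ≤ r ^ n * M := by
    intro n
    induction n with
    | zero => intro x hx; simpa using hbdd' x (by simpa using hx)
    | succ n ih =>
      intro x hx
      have hx1 : 2 ^ n * X ≤ x / 2 := by
        rw [le_div_iff₀ (by norm_num : (0:ℝ) < 2)]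
        calc 2 ^ n * X * 2 = 2 ^ (n+1) * X := by ring
          _ ≤ x := hx
      have hXx : X ≤ x / 2 := by
        calc X = 1 * X := (one_mul X).symm
          _ ≤ 2 ^ n * X := by
            apply mul_le_mul_of_nonneg_right _ hXpos.le
            exact one_le_pow₀ (by norm_num : (1:ℝ) ≤ 2)
          _ ≤ x / 2 := hx1
      have := hstep (x/2) hXx
      have h2 : 2 * (x/2) = x := by ring
      rw [h2] at this
      calc u x ≤ r * u (x/2) := this
        _ ≤ r * (r ^ n * M) := mul_le_mul_of_nonneg_left (ih _ hx1) hr0.le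
        _ = r ^ (n+1) * M := by ring
  rw [Metric.tendsto_nhds]
  intro ε hε
  obtain ⟨n, hn⟩ : ∃ n : ℕ, r ^ n * M < ε := by
    have h := (tendsto_pow_atTop_nhds_zero_of_lt_one hr0.le hr1).mul_const M
    rw [zero_mul] at h
    exact (h.eventually_lt_const hε).exists
  filter_upwards [eventually_ge_atTop (2 ^ n * X)] with x hx
  have hx0 : (0:ℝ) ≤ x := le_trans (by positivity) hx
  rw [Real.dist_eq, sub_zero, abs_of_nonneg (hupos x hx0).le]
  exact lt_of_le_of_lt (hdecay n x hx) hn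

/-- If `b` is regularly varying with a strictly smaller index than `a`, then `b/a → 0`. -/
lemma rv_ratio_zero (a b : ℝ → ℝ) (ka kb : ℝ) (h : kb < ka)
    (hapos : ∀ x ≥ (0:ℝ), 0 < a x) (hbpos : ∀ x ≥ (0:ℝ), 0 < b x)
    (hac : ContinuousOn a (Set.Ici 0)) (hbc : ContinuousOn b (Set.Ici 0))
    (harv : RegularlyVarying a ka) (hbrv : RegularlyVarying b kb) :
    Tendsto (fun z => b z / a z) atTop (𝓝 0) := by
  apply ratio_to_zero _ (fun x hx => div_pos (hbpos x hx) (hapos x hx))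
    (hbc.div hac (fun x hx => (hapos x hx).ne'))
    ((2:ℝ) ^ kb / (2:ℝ) ^ ka)
  · rw [← Real.rpow_sub two_pos]
    exact Real.rpow_lt_one_of_one_lt_of_neg one_lt_two (by linarith)
  · have := (hbrv 2 two_pos).div (harv 2 two_pos)
      (Real.rpow_pos_of_pos two_pos ka).ne'
    apply this.congr'
    filter_upwards [eventually_gt_atTop (0:ℝ)] with z hz
    have h1 : 0 < a z := hapos z hz.le
    have h2 : 0 < b z := hbpos z hz.le
    have h3 : 0 < a (2 * z) := hapos _ (by linarith)
    have h4 : 0 < b (2 * z) := hbpos _ (by linarith)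
    simp only [Pi.div_apply]
    field_simp

/-- If `b/a → 0` then `a + b` inherits the regular variation of `a`. -/
lemma domRV (a b : ℝ → ℝ) (k : ℝ) (hapos : ∀ x ≥ (0:ℝ), 0 < a x)
    (hbpos : ∀ x ≥ (0:ℝ), 0 < b x)
    (harv : RegularlyVarying a k) (hba : Tendsto (fun z => b z / a z) atTop (𝓝 0)) :
    RegularlyVarying (fun z => a z + b z) k := by
  intro t ht
  have htz : Tendsto (fun z : ℝ => t * z) atTop atTop :=
    Tendsto.const_mul_atTop ht tendsto_id
  have hgt : Tendsto (fun z => b (t * z) / a (t * z)) atTop (𝓝 0) := hba.comp htz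
  have hmain : Tendsto (fun z => a (t * z) / a z *
      ((1 + b (t * z) / a (t * z)) / (1 + b z / a z))) atTop (𝓝 (t ^ k * ((1 + 0) / (1 + 0)))) := by
    apply (harv t ht).mul
    apply Tendsto.div (tendsto_const_nhds.add hgt) (tendsto_const_nhds.add hba)
    norm_num
  norm_num at hmain
  apply hmain.congr'
  filter_upwards [eventually_gt_atTop (0:ℝ)] with z hz
  have haz : 0 < a z := hapos z hz.le
  have hatz : 0 < a (t * z) := hapos _ (by positivity)
  have hbz : 0 < b z := hbpos z hz.le
  have hS : a z + b z ≠ 0 := by linarith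
  field_simp

/-- Sum of two regularly varying functions with the same index. -/
lemma sumRV_eq (a b : ℝ → ℝ) (k : ℝ) (hapos : ∀ x ≥ (0:ℝ), 0 < a x)
    (hbpos : ∀ x ≥ (0:ℝ), 0 < b x)
    (harv : RegularlyVarying a k) (hbrv : RegularlyVarying b k) :
    RegularlyVarying (fun z => a z + b z) k := by
  intro t ht
  have h1 := harv t ht
  have h2 := hbrv t ht
  have h0 : Tendsto (fun z => |a (t * z) / a z - t ^ k| + |b (t * z) / b z - t ^ k|)
      atTop (𝓝 0) := by
    have := ((h1.sub_const (t ^ k)).abs).add ((h2.sub_const (t ^ k)).abs)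
    simpa using this
  suffices hs : Tendsto (fun z => (a (t * z) + b (t * z)) / (a z + b z) - t ^ k) atTop (𝓝 0) by
    have := hs.add_const (t ^ k)
    simpa using this
  apply squeeze_zero_norm' _ h0
  filter_upwards [eventually_gt_atTop (0:ℝ)] with z hz
  have haz : 0 < a z := hapos z hz.le
  have hbz : 0 < b z := hbpos z hz.le
  have hS : 0 < a z + b z := by linarith
  set c := t ^ k with hc
  have key : (a (t * z) + b (t * z)) / (a z + b z) - c =
      (a (t * z) - c * a z) / (a z + b z) + (b (t * z) - c * b z) / (a z + b z) := by
    field_simp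
    ring
  rw [Real.norm_eq_abs, key]
  have e1 : |a (t * z) - c * a z| / a z = |a (t * z) / a z - c| := by
    have h : (a (t * z) - c * a z) / a z = a (t * z) / a z - c := by field_simp
    rw [← h, abs_div, abs_of_pos haz]
  have e2 : |b (t * z) - c * b z| / b z = |b (t * z) / b z - c| := by
    have h : (b (t * z) - c * b z) / b z = b (t * z) / b z - c := by field_simp
    rw [← h, abs_div, abs_of_pos hbz]
  calc |(a (t * z) - c * a z) / (a z + b z) + (b (t * z) - c * b z) / (a z + b z)|
      ≤ |(a (t * z) - c * a z) / (a z + b z)| + |(b (t * z) - c * b z) / (a z + b z)| :=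
        abs_add_le _ _
    _ = |a (t * z) - c * a z| / (a z + b z) + |b (t * z) - c * b z| / (a z + b z) := by
        rw [abs_div, abs_div, abs_of_pos hS]
    _ ≤ |a (t * z) - c * a z| / a z + |b (t * z) - c * b z| / b z := by
        gcongr <;> linarith
    _ = |a (t * z) / a z - c| + |b (t * z) / b z - c| := by rw [e1, e2]

/-- if `f_X, f_Y` are positive, continuous, ultimately decreasing
probability densities on `[0,∞)` that are regularly varying with indices `-β-1`
and `-γ-1`, then the convolution density `f_Z(z) = ∫_0^z f_X(z-y) f_Y(y) dy`
satisfies `f_Z(z) ∼ f_X(z) + f_Y(z)` as `z → ∞` and is regularly varying with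
index `-min{β,γ} - 1`. -/
theorem stmt_13 (fX fY : ℝ → ℝ) (β γ : ℝ) (hβ : 0 < β) (hγ : 0 < γ)
    (hXpos : ∀ x ≥ (0:ℝ), 0 < fX x) (hYpos : ∀ y ≥ (0:ℝ), 0 < fY y)
    (hXc : ContinuousOn fX (Set.Ici 0)) (hYc : ContinuousOn fY (Set.Ici 0))
    (hXud : UltimatelyDecreasing fX) (hYud : UltimatelyDecreasing fY)
    (hXrv : RegularlyVarying fX (-β - 1)) (hYrv : RegularlyVarying fY (-γ - 1))
    (hXone : ∫ x in Set.Ioi (0:ℝ), fX x = 1) (hYone : ∫ y in Set.Ioi (0:ℝ), fY y = 1) :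
    Tendsto (fun z => (∫ y in (0:ℝ)..z, fX (z - y) * fY y) / (fX z + fY z))
      atTop (𝓝 1) ∧
    RegularlyVarying (fun z => ∫ y in (0:ℝ)..z, fX (z - y) * fY y)
      (-(min β γ) - 1) := by
  obtain ⟨xX, hxX⟩ := hXud
  obtain ⟨xY, hxY⟩ := hYud
  have hantiX : AntitoneOn fX (Set.Ici (max xX 0)) :=
    hxX.mono (Set.Ici_subset_Ici.mpr (le_max_left _ _))
  have hantiY : AntitoneOn fY (Set.Ici (max xY 0)) :=
    hxY.mono (Set.Ici_subset_Ici.mpr (le_max_left _ _))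
  have hA := conv_half fX fY (-β - 1) (max xX 0) (le_max_right _ _)
    hXpos hYpos hXc hYc hantiX hXrv hYone
  have hB := conv_half fY fX (-γ - 1) (max xY 0) (le_max_right _ _)
    hYpos hXpos hYc hXc hantiY hYrv hXone
  -- Part 1: f_Z ∼ f_X + f_Y
  have part1 : Tendsto (fun z => (∫ y in (0:ℝ)..z, fX (z - y) * fY y) / (fX z + fY z))
      atTop (𝓝 1) := by
    have h0 : Tendsto (fun z =>
        |(∫ y in (0:ℝ)..(z/2), fX (z - y) * fY y) / fX z - 1| +
        |(∫ y in (0:ℝ)..(z/2), fY (z - y) * fX y) / fY z - 1|) atTop (𝓝 0) := by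
      have := ((hA.sub_const 1).abs).add ((hB.sub_const 1).abs)
      simpa using this
    suffices hs : Tendsto (fun z =>
        (∫ y in (0:ℝ)..z, fX (z - y) * fY y) / (fX z + fY z) - 1) atTop (𝓝 0) by
      have := hs.add_const 1
      simpa using this
    apply squeeze_zero_norm' _ h0
    filter_upwards [eventually_gt_atTop (0:ℝ)] with z hz
    have haz : 0 < fX z := hXpos z hz.le
    have hbz : 0 < fY z := hYpos z hz.le
    have hS : 0 < fX z + fY z := by linarith
    set A := ∫ y in (0:ℝ)..(z/2), fX (z - y) * fY y with hAdef
    set B := ∫ y in (0:ℝ)..(z/2), fY (z - y) * fX y with hBdef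
    have hsplit : (∫ y in (0:ℝ)..z, fX (z - y) * fY y) = A + B :=
      split_conv fX fY hXc hYc z hz.le
    have key : (∫ y in (0:ℝ)..z, fX (z - y) * fY y) / (fX z + fY z) - 1 =
        (A - fX z) / (fX z + fY z) + (B - fY z) / (fX z + fY z) := by
      rw [hsplit]
      field_simp
      ring
    rw [Real.norm_eq_abs, key]
    have e1 : |A - fX z| / fX z = |A / fX z - 1| := by
      have h : (A - fX z) / fX z = A / fX z - 1 := by field_simp
      rw [← h, abs_div, abs_of_pos haz]
    have e2 : |B - fY z| / fY z = |B / fY z - 1| := by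
      have h : (B - fY z) / fY z = B / fY z - 1 := by field_simp
      rw [← h, abs_div, abs_of_pos hbz]
    calc |(A - fX z) / (fX z + fY z) + (B - fY z) / (fX z + fY z)|
        ≤ |(A - fX z) / (fX z + fY z)| + |(B - fY z) / (fX z + fY z)| := abs_add_le _ _
      _ = |A - fX z| / (fX z + fY z) + |B - fY z| / (fX z + fY z) := by
          rw [abs_div, abs_div, abs_of_pos hS]
      _ ≤ |A - fX z| / fX z + |B - fY z| / fY z := by
          gcongr <;> linarith
      _ = |A / fX z - 1| + |B / fY z - 1| := by rw [e1, e2]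
  -- the sum f_X + f_Y is regularly varying with index -min β γ - 1
  have hSrv : RegularlyVarying (fun z => fX z + fY z) (-(min β γ) - 1) := by
    rcases lt_trichotomy β γ with hlt | heq | hgt
    · have hmin : -(min β γ) - 1 = -β - 1 := by rw [min_eq_left hlt.le]
      rw [hmin]
      exact domRV fX fY (-β - 1) hXpos hYpos hXrv
        (rv_ratio_zero fX fY (-β - 1) (-γ - 1) (by linarith) hXpos hYpos hXc hYc hXrv hYrv)
    · subst heq
      have hmin : -(min β β) - 1 = -β - 1 := by rw [min_self]
      rw [hmin]
      exact sumRV_eq fX fY (-β - 1) hXpos hYpos hXrv hYrv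
    · have hmin : -(min β γ) - 1 = -γ - 1 := by rw [min_eq_right hgt.le]
      rw [hmin]
      have := domRV fY fX (-γ - 1) hYpos hXpos hYrv
        (rv_ratio_zero fY fX (-γ - 1) (-β - 1) (by linarith) hYpos hXpos hYc hXc hYrv hXrv)
      have heq : (fun z => fY z + fX z) = (fun z => fX z + fY z) := by
        funext z; ring
      rwa [heq] at this
  refine ⟨part1, ?_⟩
  -- Part 2: regular variation of f_Z
  intro t ht
  have htz : Tendsto (fun z : ℝ => t * z) atTop atTop :=
    Tendsto.const_mul_atTop ht tendsto_id
  have h1 : Tendsto (fun z =>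
      (∫ y in (0:ℝ)..(t * z), fX ((t * z) - y) * fY y) / (fX (t * z) + fY (t * z)))
      atTop (𝓝 1) := part1.comp htz
  have h3 : Tendsto (fun z =>
      (fX z + fY z) / (∫ y in (0:ℝ)..z, fX (z - y) * fY y)) atTop (𝓝 1) := by
    have := part1.inv₀ one_ne_zero
    rw [inv_one] at this
    exact this.congr fun z => inv_div _ _
  have hS := hSrv t ht
  have hmul := (h1.mul hS).mul h3
  rw [one_mul, mul_one] at hmul
  apply hmul.congr'
  filter_upwards [eventually_gt_atTop (0:ℝ)] with z hz
  have hSz : fX z + fY z ≠ 0 := by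
    have := hXpos z hz.le; have := hYpos z hz.le; linarith
  have hStz : fX (t * z) + fY (t * z) ≠ 0 := by
    have h1' : (0:ℝ) ≤ t * z := by positivity
    have := hXpos _ h1'; have := hYpos _ h1'; linarith
  rw [div_mul_div_cancel₀ hStz, div_mul_div_cancel₀ hSz]
end

section
/- Let $X, Y$ be independent non-negative integrable random variables with positive, continuous, ultimately decreasing densities $f_X, f_Y$, with $\bar{F}_X$ regularly varying of index $-\beta$ and $\bar{F}_Y$ regularly varying of index $-\gamma$, where $1 < \beta$ and $\beta + 1 < \gamma$. Then $E[Y \mid X+Y = \mathrm{VaR}_\alpha(X+Y)] \to E[Y]$ as $\alpha \to 1$. -/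
open MeasureTheory Filter Set
open scoped Topology
open scoped ENNReal NNReal

lemma meas_of_zero_cont {f : ℝ → ℝ} (h0 : ∀ x < (0:ℝ), f x = 0)
    (hc : ContinuousOn f (Ici 0)) : Measurable f := by
  apply measurable_of_continuousOn_compl_singleton (0:ℝ)
  intro x hx
  rcases lt_or_gt_of_ne (by simpa using hx : x ≠ 0) with h | h
  · have : ContinuousWithinAt (fun _ => (0:ℝ)) ({(0:ℝ)}ᶜ) x := continuousWithinAt_const
    apply this.congr_of_eventuallyEq_of_mem
    · filter_upwards [inter_mem_nhdsWithin _ (Iio_mem_nhds h)] with y hy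
      exact h0 y hy.2
    · simpa using hx
  · have h1 : ContinuousAt f x :=
      (hc x (le_of_lt h)).continuousAt (Ici_mem_nhds h)
    exact h1.continuousWithinAt

lemma rv_ratio {T : ℝ → ℝ} {k : ℝ} (hrv : RegularlyVarying T k)
    (hTpos : ∀ z, 0 < T z) {a b : ℝ} (ha : 0 < a) (hb : 0 < b) :
    Tendsto (fun z => T (a*z) / T (b*z)) atTop (𝓝 (a ^ k / b ^ k)) := by
  have hA := hrv a ha
  have hB := hrv b hb
  have h := hA.div hB (by positivity)
  apply h.congr
  intro z
  show T (a*z) / T z / (T (b*z) / T z) = _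
  rw [div_div_div_cancel_right₀ (hTpos z).ne']

lemma rv_diff_tendsto {T : ℝ → ℝ} {k : ℝ} (hrv : RegularlyVarying T k)
    (hTpos : ∀ z, 0 < T z) {a b c d : ℝ} (ha : 0 < a) (hb : 0 < b) (hc : 0 < c)
    (hd : 0 < d) (hne : c ^ k ≠ d ^ k) :
    Tendsto (fun z => (T (a*z) - T (b*z)) / (T (c*z) - T (d*z))) atTop
      (𝓝 ((a ^ k - b ^ k) / (c ^ k - d ^ k))) := by
  have h := ((hrv a ha).sub (hrv b hb)).div ((hrv c hc).sub (hrv d hd))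
    (sub_ne_zero.2 hne)
  apply h.congr
  intro z
  show (T (a*z) / T z - T (b*z) / T z) / (T (c*z) / T z - T (d*z) / T z) = _
  rw [div_sub_div_same, div_sub_div_same, div_div_div_cancel_right₀ (hTpos z).ne']


/-- If `TY` is regularly varying of negative enough index relative to `TX`,
both antitone positive, then `z * TY (z/4) / TX z → 0`. -/
lemma dyadic_decay (TY TX : ℝ → ℝ) (hTYa : Antitone TY) (hTXa : Antitone TX)
    (hTYpos : ∀ z, 0 < TY z) (hTXpos : ∀ z, 0 < TX z)
    (γ β : ℝ) (hYrv : RegularlyVarying TY (-γ)) (hXrv : RegularlyVarying TX (-β))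
    (hidx : β + 1 < γ) :
    Tendsto (fun z => z * TY (z/4) / TX z) atTop (𝓝 0) := by
  set G : ℝ → ℝ := fun w => w * TY (w/8) / TX w with hG
  have hGpos : ∀ w > 0, 0 < G w := fun w hw => by
    exact div_pos (mul_pos hw (hTYpos _)) (hTXpos _)
  -- ratio limit
  have hrat : Tendsto (fun w => G (2*w) / G w) atTop (𝓝 (2 * 2 ^ (-γ) * (2:ℝ) ^ β)) := by
    have h1 : Tendsto (fun w => TY (2*(w/8)) / TY (w/8)) atTop (𝓝 ((2:ℝ) ^ (-γ))) :=
      (hYrv 2 two_pos).comp (Tendsto.atTop_div_const (by norm_num) tendsto_id)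
    have h2 : Tendsto (fun w => TX (2*w) / TX w) atTop (𝓝 ((2:ℝ) ^ (-β))) := hXrv 2 two_pos
    have h2' : Tendsto (fun w => TX w / TX (2*w)) atTop (𝓝 ((2:ℝ) ^ β)) := by
      have h4 := h2.inv₀ (by positivity)
      have h3 : ((2:ℝ) ^ (-β))⁻¹ = (2:ℝ) ^ β := by
        rw [← Real.rpow_neg (by norm_num), neg_neg]
      rw [h3] at h4
      exact h4.congr (fun w => by rw [inv_div])
    have hcomb := (h1.const_mul 2).mul h2'
    apply hcomb.congr'
    filter_upwards [eventually_gt_atTop 0] with w hw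
    have hTXw := (hTXpos w).ne'
    have hTX2w := (hTXpos (2*w)).ne'
    have hTYw8 := (hTYpos (w/8)).ne'
    have h8 : (2*w)/8 = 2*(w/8) := by ring
    simp only [hG, h8]
    field_simp
  have hlim_lt : 2 * (2:ℝ) ^ (-γ) * (2:ℝ) ^ β < 1 := by
    have : 2 * (2:ℝ) ^ (-γ) * (2:ℝ) ^ β = (2:ℝ) ^ (1 - γ + β) := by
      rw [show (1:ℝ) - γ + β = 1 + (-γ) + β by ring, Real.rpow_add two_pos,
        Real.rpow_add two_pos, Real.rpow_one]
    rw [this]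
    exact Real.rpow_lt_one_of_one_lt_of_neg one_lt_two (by linarith)
  set L := 2 * (2:ℝ) ^ (-γ) * (2:ℝ) ^ β with hL
  have hLpos : 0 < L := by positivity
  set q := (L+1)/2 with hq
  have hq0 : 0 < q := by positivity
  have hq1 : q < 1 := by rw [hq]; linarith
  have hLq : L < q := by rw [hq]; linarith
  -- eventual contraction
  have hev : ∀ᶠ w in atTop, G (2*w) ≤ q * G w := by
    filter_upwards [hrat.eventually_lt_const hLq, eventually_gt_atTop 0] with w hw hw0
    have := hGpos w hw0
    calc G (2*w) = G (2*w) / G w * G w := by field_simp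
    _ ≤ q * G w := by apply mul_le_mul_of_nonneg_right hw.le this.le
  obtain ⟨w₀, hw₀⟩ := hev.exists_forall_of_atTop
  set z₀ := max w₀ 1 with hz₀
  have hz₀1 : (1:ℝ) ≤ z₀ := le_max_right _ _
  have hz₀0 : (0:ℝ) < z₀ := lt_of_lt_of_le one_pos hz₀1
  set a : ℕ → ℝ := fun n => G (2^n * z₀) with ha
  have hstep : ∀ n, a (n+1) ≤ q * a n := by
    intro n
    have h1 : (2:ℝ)^(n+1) * z₀ = 2 * (2^n * z₀) := by ring
    have h2 : w₀ ≤ 2^n * z₀ := by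
      calc w₀ ≤ z₀ := le_max_left _ _
      _ = 1 * z₀ := (one_mul _).symm
      _ ≤ 2^n * z₀ := by
        apply mul_le_mul_of_nonneg_right _ hz₀0.le
        exact one_le_pow₀ (by norm_num)
    rw [ha]; simp only [h1]
    exact hw₀ _ h2
  have hgeo : ∀ n, a n ≤ q^n * a 0 := by
    intro n
    induction n with
    | zero => simp
    | succ n ih =>
      calc a (n+1) ≤ q * a n := hstep n
      _ ≤ q * (q^n * a 0) := by apply mul_le_mul_of_nonneg_left ih hq0.le
      _ = q^(n+1) * a 0 := by ring
  have ha0 : 0 < a 0 := hGpos _ (by simpa using hz₀0)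
  -- main bound: for z ≥ 2^N * z₀, H z ≤ q^N * a 0
  have hbound : ∀ N : ℕ, ∀ z : ℝ, 2^N * z₀ ≤ z → z * TY (z/4) / TX z ≤ q^N * a 0 := by
    intro N z hz
    have hzz₀ : z₀ ≤ z := le_trans (by
      calc z₀ = 1 * z₀ := (one_mul _).symm
      _ ≤ 2^N * z₀ := by
        apply mul_le_mul_of_nonneg_right _ hz₀0.le
        exact one_le_pow₀ (by norm_num)) hz
    have hz0 : 0 < z := lt_of_lt_of_le hz₀0 hzz₀
    set m : ℕ := ⌊z / z₀⌋₊ with hm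
    have hm1 : 1 ≤ m := by
      rw [hm, Nat.le_floor_iff (by positivity)]
      rw [le_div_iff₀ hz₀0]; simpa using hzz₀
    set n : ℕ := Nat.log 2 m with hn
    have h2n : (2:ℝ)^n * z₀ ≤ z := by
      have h1 : (2:ℕ)^n ≤ m := Nat.pow_log_le_self 2 (by omega)
      have h2 : (m:ℝ) ≤ z / z₀ := Nat.floor_le (by positivity)
      have : (2:ℝ)^n ≤ z / z₀ := by
        calc (2:ℝ)^n = ((2^n : ℕ) : ℝ) := by push_cast; ring
        _ ≤ (m:ℝ) := by exact_mod_cast h1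
        _ ≤ z / z₀ := h2
      calc (2:ℝ)^n * z₀ ≤ (z/z₀) * z₀ := mul_le_mul_of_nonneg_right this hz₀0.le
      _ = z := by field_simp
    have h2n1 : z ≤ 2^(n+1) * z₀ := by
      have h1 : m < 2^(n+1) := Nat.lt_pow_succ_log_self (by norm_num) m
      have h2 : z / z₀ < (m:ℝ) + 1 := Nat.lt_floor_add_one _
      have h3 : (m:ℝ) + 1 ≤ (2:ℝ)^(n+1) := by
        have : (m+1 : ℕ) ≤ 2^(n+1) := h1
        exact_mod_cast this
      have : z / z₀ ≤ (2:ℝ)^(n+1) := le_trans h2.le h3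
      calc z = (z/z₀) * z₀ := by field_simp
      _ ≤ 2^(n+1) * z₀ := mul_le_mul_of_nonneg_right this hz₀0.le
    have hNn : N ≤ n := by
      have : (2:ℕ)^N ≤ m := by
        rw [hm, Nat.le_floor_iff (by positivity)]
        push_cast
        rw [le_div_iff₀ hz₀0]
        exact hz
      calc N = Nat.log 2 (2^N) := (Nat.log_pow (by norm_num) N).symm
      _ ≤ Nat.log 2 m := Nat.log_mono_right this
    -- H z ≤ a (n+1)
    have hHa : z * TY (z/4) / TX z ≤ a (n+1) := by
      have hkey : (2:ℝ)^(n+1) * z₀ / 8 = 2^n * z₀ / 4 := by ring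
      have h1 : TY (z/4) ≤ TY (2^n * z₀ / 4) := hTYa (by linarith)
      have h2 : TX (2^(n+1) * z₀) ≤ TX z := hTXa h2n1
      show _ ≤ G (2^(n+1) * z₀)
      rw [hG]
      simp only [hkey]
      apply div_le_div₀ (mul_nonneg (by positivity) (hTYpos _).le)
        (mul_le_mul h2n1 h1 (hTYpos _).le (by positivity)) (hTXpos _) h2
    calc z * TY (z/4) / TX z ≤ a (n+1) := hHa
    _ ≤ q^(n+1) * a 0 := hgeo (n+1)
    _ ≤ q^N * a 0 := by
      apply mul_le_mul_of_nonneg_right _ ha0.le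
      exact pow_le_pow_of_le_one hq0.le hq1.le (by omega)
  -- conclude
  rw [Metric.tendsto_atTop]
  intro ε hε
  have hq' : Tendsto (fun n : ℕ => q^n * a 0) atTop (𝓝 0) := by
    have := (tendsto_pow_atTop_nhds_zero_of_lt_one hq0.le hq1).mul_const (a 0)
    simpa using this
  obtain ⟨N, hN⟩ := (hq'.eventually (gt_mem_nhds hε)).exists_forall_of_atTop
  refine ⟨2^N * z₀, fun z hz => ?_⟩
  have h1 := hbound N z hz
  have hz0 : 0 < z := by
    have : (0:ℝ) < 2^N * z₀ := by positivity
    linarith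
  have h2 : 0 ≤ z * TY (z/4) / TX z :=
    div_nonneg (mul_nonneg hz0.le (hTYpos _).le) (hTXpos _).le
  rw [Real.dist_eq, sub_zero, abs_of_nonneg h2]
  exact lt_of_le_of_lt h1 (hN N le_rfl)

set_option maxHeartbeats 2000000 in
lemma main_limit (fX fY TX TY : ℝ → ℝ) (β γ : ℝ) (hβ : 1 < β) (hβγ : β + 1 < γ)
    (hfX0 : ∀ x < (0:ℝ), fX x = 0) (hfY0 : ∀ y < (0:ℝ), fY y = 0)
    (hXpos : ∀ x ≥ (0:ℝ), 0 < fX x) (hYpos : ∀ y ≥ (0:ℝ), 0 < fY y)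
    (hXc : ContinuousOn fX (Ici 0)) (hYc : ContinuousOn fY (Ici 0))
    (hfXm : Measurable fX) (hfYm : Measurable fY)
    (x₂ y₂ : ℝ) (hx₂ : AntitoneOn fX (Ici x₂)) (hy₂ : AntitoneOn fY (Ici y₂))
    (hTXa : Antitone TX) (hTYa : Antitone TY)
    (hTXpos : ∀ z, 0 < TX z) (hTYpos : ∀ z, 0 < TY z)
    (hTX1 : TX 0 ≤ 1)
    (hTdX : ∀ u v, 0 ≤ u → u ≤ v → TX u - TX v = ∫ x in u..v, fX x)
    (hTdY : ∀ u v, 0 ≤ u → u ≤ v → TY u - TY v = ∫ x in u..v, fY x)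
    (hXrv : RegularlyVarying TX (-β)) (hYrv : RegularlyVarying TY (-γ))
    (hIY : Integrable (fun y => y * fY y) volume) (hfYint : Integrable fY volume)
    (hfY1 : (∫ y, fY y) = 1) :
    Tendsto (fun z => (∫ y in (0:ℝ)..z, y * fX (z - y) * fY y) /
      (∫ w in (0:ℝ)..z, fX (z - w) * fY w)) atTop (𝓝 (∫ y, y * fY y)) := by
  have hβ0 : (0:ℝ) < β := by linarith
  have hfXnn : ∀ x, 0 ≤ fX x := by
    intro x
    rcases lt_or_ge x 0 with h | h
    · exact le_of_eq (hfX0 x h).symm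
    · exact (hXpos x h).le
  have hfYnn : ∀ y, 0 ≤ fY y := by
    intro y
    rcases lt_or_ge y 0 with h | h
    · exact le_of_eq (hfY0 y h).symm
    · exact (hYpos y h).le
  -- continuity of shifted integrands
  have hcontXz : ∀ z u v : ℝ, 0 ≤ u → v ≤ z →
      ContinuousOn (fun y => fX (z - y)) (Icc u v) := by
    intro z u v hu hv
    apply hXc.comp ((continuous_const.sub continuous_id).continuousOn)
    intro y hy
    simp only [mem_Ici]
    have : y ≤ v := hy.2
    simp only [Pi.sub_apply, id_eq]
    linarith
  have hintN : ∀ z u v : ℝ, 0 ≤ u → u ≤ v → v ≤ z →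
      IntervalIntegrable (fun y => y * fX (z - y) * fY y) volume u v := by
    intro z u v hu huv hv
    apply ContinuousOn.intervalIntegrable
    rw [uIcc_of_le huv]
    exact ((continuousOn_id.mul (hcontXz z u v hu hv)).mul
      (hYc.mono (fun y hy => le_trans hu hy.1)))
  have hintD : ∀ z u v : ℝ, 0 ≤ u → u ≤ v → v ≤ z →
      IntervalIntegrable (fun w => fX (z - w) * fY w) volume u v := by
    intro z u v hu huv hv
    apply ContinuousOn.intervalIntegrable
    rw [uIcc_of_le huv]
    exact ((hcontXz z u v hu hv).mul (hYc.mono (fun y hy => le_trans hu hy.1)))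
  have hintfX : ∀ u v : ℝ, 0 ≤ u → u ≤ v → IntervalIntegrable fX volume u v := by
    intro u v hu huv
    apply ContinuousOn.intervalIntegrable
    rw [uIcc_of_le huv]
    exact hXc.mono (fun x hx => le_trans hu hx.1)
  have hintfY : ∀ u v : ℝ, 0 ≤ u → u ≤ v → IntervalIntegrable fY volume u v := by
    intro u v hu huv
    apply ContinuousOn.intervalIntegrable
    rw [uIcc_of_le huv]
    exact hYc.mono (fun x hx => le_trans hu hx.1)
  -- sandwich bounds
  have hupX : ∀ u v, max x₂ 0 ≤ u → u ≤ v → TX u - TX v ≤ (v - u) * fX u := by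
    intro u v hu huv
    have hu0 : (0:ℝ) ≤ u := le_trans (le_max_right _ _) hu
    have hux : x₂ ≤ u := le_trans (le_max_left _ _) hu
    rw [hTdX u v hu0 huv]
    calc ∫ x in u..v, fX x ≤ ∫ _x in u..v, fX u := by
          apply intervalIntegral.integral_mono_on huv (hintfX u v hu0 huv)
            intervalIntegrable_const
          intro x hx
          exact hx₂ (mem_Ici.2 hux) (mem_Ici.2 (le_trans hux hx.1)) hx.1
    _ = (v - u) * fX u := by simp [smul_eq_mul]
  have hloX : ∀ u v, max x₂ 0 ≤ u → u ≤ v → (v - u) * fX v ≤ TX u - TX v := by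
    intro u v hu huv
    have hu0 : (0:ℝ) ≤ u := le_trans (le_max_right _ _) hu
    have hux : x₂ ≤ u := le_trans (le_max_left _ _) hu
    rw [hTdX u v hu0 huv]
    calc (v - u) * fX v = ∫ _x in u..v, fX v := by simp [smul_eq_mul]
    _ ≤ ∫ x in u..v, fX x := by
          apply intervalIntegral.integral_mono_on huv intervalIntegrable_const
            (hintfX u v hu0 huv)
          intro x hx
          exact hx₂ (mem_Ici.2 (le_trans hux hx.1)) (mem_Ici.2 (le_trans hux huv)) hx.2
  have hloY : ∀ u v, max y₂ 0 ≤ u → u ≤ v → (v - u) * fY v ≤ TY u - TY v := by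
    intro u v hu huv
    have hu0 : (0:ℝ) ≤ u := le_trans (le_max_right _ _) hu
    have hux : y₂ ≤ u := le_trans (le_max_left _ _) hu
    rw [hTdY u v hu0 huv]
    calc (v - u) * fY v = ∫ _x in u..v, fY v := by simp [smul_eq_mul]
    _ ≤ ∫ x in u..v, fY x := by
          apply intervalIntegral.integral_mono_on huv intervalIntegrable_const
            (hintfY u v hu0 huv)
          intro x hx
          exact hy₂ (mem_Ici.2 (le_trans hux hx.1)) (mem_Ici.2 (le_trans hux huv)) hx.2
  have hdposX : ∀ u v, 0 ≤ u → u < v → 0 < TX u - TX v := by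
    intro u v hu huv
    rw [hTdX u v hu huv.le]
    apply intervalIntegral.intervalIntegral_pos_of_pos_on (hintfX u v hu huv.le)
      _ huv
    intro x hx
    exact hXpos x (le_trans hu hx.1.le)
  -- uniform constant bound
  obtain ⟨C, hC0, hCbd⟩ :
      ∃ C : ℝ, 0 ≤ C ∧ ∀ᶠ z in atTop, ∀ y ∈ Icc (0:ℝ) (z/2), fX (z - y) ≤ C * fX z := by
    have h21 : ((2:ℝ))^(-β) < 1 := Real.rpow_lt_one_of_one_lt_of_neg one_lt_two (by linarith)
    have hne : ((1:ℝ))^(-β) ≠ ((2:ℝ))^(-β) := by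
      rw [Real.one_rpow]; exact h21.ne'
    have hQ := rv_diff_tendsto hXrv hTXpos (a:=(4:ℝ)⁻¹) (b:=(2:ℝ)⁻¹) (c:=1) (d:=2)
      (by norm_num) (by norm_num) one_pos two_pos hne
    set C₀ := (((4:ℝ)⁻¹)^(-β) - ((2:ℝ)⁻¹)^(-β))/(((1:ℝ))^(-β) - ((2:ℝ))^(-β)) with hC₀
    have hC₀0 : 0 ≤ C₀ := by
      apply ge_of_tendsto hQ
      filter_upwards [eventually_gt_atTop (0:ℝ)] with z hz
      apply div_nonneg
      · exact sub_nonneg.2 (hTXa (by linarith))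
      · exact sub_nonneg.2 (hTXa (by linarith))
    refine ⟨4*C₀ + 1, by linarith, ?_⟩
    have hev := (hQ.const_mul 4).eventually_lt_const (show 4*C₀ < 4*C₀+1 by linarith)
    set m := max x₂ 0 with hm
    have hm0 : 0 ≤ m := le_max_right _ _
    filter_upwards [hev, eventually_ge_atTop (4*m + 1)] with z hQz hzm
    intro y hy
    have hz0 : (0:ℝ) < z := by linarith
    have hm4 : m ≤ (4:ℝ)⁻¹ * z := by linarith
    have hm2 : m ≤ (2:ℝ)⁻¹ * z := by linarith
    have hmz : m ≤ z := by linarith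
    set A := TX ((4:ℝ)⁻¹*z); set B := TX ((2:ℝ)⁻¹*z)
    set E := TX ((1:ℝ)*z) with hEdef; set F := TX ((2:ℝ)*z) with hFdef
    have hEz : E = TX z := by rw [hEdef, one_mul]
    have s1 : ((2:ℝ)⁻¹*z - (4:ℝ)⁻¹*z) * fX ((2:ℝ)⁻¹*z) ≤ A - B :=
      hloX _ _ hm4 (by linarith)
    have s2 : E - F ≤ z * fX z := by
      have h := hupX z ((2:ℝ)*z) hmz (by linarith)
      have h2 : (2:ℝ)*z - z = z := by ring
      rw [h2] at h
      rw [hEz, hFdef]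
      exact h
    have hd2 : 0 < E - F := by
      rw [hEz, hFdef]
      exact hdposX z ((2:ℝ)*z) (by linarith) (by linarith)
    have hd1 : 0 ≤ A - B := by
      have h0 : 0 ≤ ((2:ℝ)⁻¹*z - (4:ℝ)⁻¹*z) * fX ((2:ℝ)⁻¹*z) :=
        mul_nonneg (by linarith) (hfXnn _)
      linarith
    have hq0 : 0 ≤ (A - B)/(E - F) := div_nonneg hd1 hd2.le
    have t1 : fX (z - y) ≤ fX ((2:ℝ)⁻¹*z) := by
      apply hx₂ (mem_Ici.2 (le_trans (le_max_left _ _) hm2))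
        (mem_Ici.2 ?_) ?_
      · have h25 : y ≤ z/2 := hy.2
        have h24 : x₂ ≤ m := le_max_left _ _
        linarith
      · have : y ≤ z/2 := hy.2
        linarith
    have t2 : fX ((2:ℝ)⁻¹*z) ≤ (A - B)/((4:ℝ)⁻¹*z) := by
      rw [le_div_iff₀ (by positivity)]
      nlinarith [s1]
    have t3 : (E - F)/z ≤ fX z := by
      rw [div_le_iff₀ hz0]
      linarith [s2]
    have e1 : (A - B)/((4:ℝ)⁻¹*z) = 4*((A - B)/(E - F)) * ((E - F)/z) := by
      field_simp
    calc fX (z - y) ≤ fX ((2:ℝ)⁻¹*z) := t1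
    _ ≤ (A - B)/((4:ℝ)⁻¹*z) := t2
    _ = 4*((A - B)/(E - F)) * ((E - F)/z) := e1
    _ ≤ 4*((A - B)/(E - F)) * fX z := by
        apply mul_le_mul_of_nonneg_left t3 (by linarith)
    _ ≤ (4*C₀+1) * fX z := mul_le_mul_of_nonneg_right hQz.le (hfXnn z)
  -- pointwise ratio limit
  have hpt : ∀ y : ℝ, 0 ≤ y → Tendsto (fun z => fX (z - y) / fX z) atTop (𝓝 1) := by
    intro y hy
    have hm0 : 0 ≤ max x₂ 0 := le_max_right _ _
    rw [tendsto_order]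
    constructor
    · intro b hb
      filter_upwards [eventually_ge_atTop (max x₂ 0 + y + 1)] with z hz
      have hz0 : (0:ℝ) < z := by linarith
      have h1 : fX z ≤ fX (z - y) := by
        apply hx₂ (mem_Ici.2 ?_) (mem_Ici.2 ?_) (by linarith)
        · have := le_max_left x₂ 0; linarith
        · have := le_max_left x₂ 0; linarith
      have h2 : (1:ℝ) ≤ fX (z-y)/fX z := (one_le_div (hXpos z hz0.le)).2 h1
      linarith
    · intro b hb
      have hcont : ContinuousAt (fun a : ℝ => a^2 * (a^β)^2) 1 :=
        ((continuous_pow 2).continuousAt).mul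
          ((Real.continuousAt_rpow_const 1 β (Or.inl one_ne_zero)).pow 2)
      have h1 : Tendsto (fun a : ℝ => a^2*(a^β)^2) (𝓝[>] 1) (𝓝 1) := by
        have h2 := hcont.tendsto.mono_left (nhdsWithin_le_nhds (s := Ioi (1:ℝ)))
        simpa using h2
      obtain ⟨a, hab, ha1⟩ : ∃ a : ℝ, a^2*(a^β)^2 < b ∧ 1 < a := by
        obtain ⟨a, ha⟩ := ((h1.eventually_lt_const hb).and self_mem_nhdsWithin).exists
        exact ⟨a, ha.1, ha.2⟩
      have ha0 : (0:ℝ) < a := lt_trans one_pos ha1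
      -- limit computation
      have hne : ((1:ℝ))^(-β) ≠ a^(-β) := by
        rw [Real.one_rpow]
        exact (Real.rpow_lt_one_of_one_lt_of_neg ha1 (by linarith)).ne'
      have hQ := rv_diff_tendsto hXrv hTXpos (a := a⁻¹*a⁻¹) (b := a⁻¹) (c := 1) (d := a)
        (by positivity) (by positivity) one_pos ha0 hne
      set A := a^β with hA
      have hA1 : 1 < A := by
        rw [hA]
        exact Real.one_lt_rpow_iff_of_pos ha0 |>.2 (Or.inl ⟨ha1, by linarith⟩)
      have hA0 : (0:ℝ) < A := lt_trans one_pos hA1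
      have hAinv : a^(-β) = A⁻¹ := by rw [Real.rpow_neg ha0.le]
      have hainv : (a⁻¹)^(-β) = A := by
        rw [Real.inv_rpow ha0.le, hAinv, inv_inv]
      have hainv2 : (a⁻¹*a⁻¹)^(-β) = A*A := by
        rw [Real.mul_rpow (by positivity) (by positivity), hainv]
      have hlim : a^2 * (((a⁻¹*a⁻¹)^(-β) - (a⁻¹)^(-β))/(((1:ℝ))^(-β) - a^(-β)))
          = a^2*(a^β)^2 := by
        rw [hainv2, hainv, hAinv, Real.one_rpow, ← hA]
        have h3 : (1:ℝ) - A⁻¹ ≠ 0 := by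
          have h9 : A⁻¹ < 1 := by
            rw [inv_lt_one_iff₀]; right; exact hA1
          intro hcon; rw [sub_eq_zero] at hcon; rw [← hcon] at h9; linarith
        have h5 : (A*A - A)/(1 - A⁻¹) = A^2 := by
          rw [div_eq_iff h3, mul_sub, mul_one, pow_two, mul_assoc,
            mul_inv_cancel₀ hA0.ne', mul_one]
        rw [h5]
      have hev := (hQ.const_mul (a^2)).eventually_lt_const (by rw [hlim]; exact hab)
      filter_upwards [hev, eventually_ge_atTop (a*a*(max x₂ 0 + 1)),
        eventually_ge_atTop (a*y/(a-1)), eventually_gt_atTop 0] with z hQz hza hzy hz0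
      -- geometric facts
      have h7 : (0:ℝ) < a⁻¹*a⁻¹ := by positivity
      have hP2m : max x₂ 0 ≤ a⁻¹*a⁻¹*z := by
        have h8 : a⁻¹*a⁻¹*(a*a*(max x₂ 0 + 1)) = max x₂ 0 + 1 := by
          field_simp
        calc max x₂ 0 ≤ max x₂ 0 + 1 := by linarith
        _ = a⁻¹*a⁻¹*(a*a*(max x₂ 0 + 1)) := h8.symm
        _ ≤ a⁻¹*a⁻¹*z := mul_le_mul_of_nonneg_left hza h7.le
      have hia : a⁻¹ < 1 := by
        nlinarith [inv_pos.2 ha0, mul_inv_cancel₀ ha0.ne']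
      have hP12 : a⁻¹*a⁻¹*z ≤ a⁻¹*z := by
        have h9 : 0 ≤ a⁻¹*z := mul_nonneg (inv_nonneg.2 ha0.le) hz0.le
        calc a⁻¹*a⁻¹*z = a⁻¹*(a⁻¹*z) := by ring
        _ ≤ 1*(a⁻¹*z) := mul_le_mul_of_nonneg_right hia.le h9
        _ = a⁻¹*z := one_mul _
      have hP1m : max x₂ 0 ≤ a⁻¹*z := le_trans hP2m hP12
      have hP1zy : a⁻¹*z ≤ z - y := by
        rw [div_le_iff₀ (by linarith : (0:ℝ) < a - 1)] at hzy
        have h9 : a⁻¹*(a*y) ≤ a⁻¹*(z*(a-1)) :=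
          mul_le_mul_of_nonneg_left hzy (inv_nonneg.2 ha0.le)
        have h10 : a⁻¹*(a*y) = y := by field_simp
        have h11 : a⁻¹*(z*(a-1)) = z - a⁻¹*z := by field_simp
        linarith
      -- sandwich inequalities
      have s1 : (a⁻¹*z - a⁻¹*a⁻¹*z) * fX (a⁻¹*z) ≤ TX (a⁻¹*a⁻¹*z) - TX (a⁻¹*z) :=
        hloX _ _ hP2m hP12
      have s2 : TX z - TX (a*z) ≤ (a*z - z) * fX z :=
        hupX _ _ (le_trans hP1m (by nlinarith [inv_pos.2 ha0])) (by nlinarith)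
      have d2 : 0 < TX z - TX (a*z) := hdposX _ _ hz0.le (by nlinarith)
      have w1pos : 0 < a⁻¹*z - a⁻¹*a⁻¹*z := by
        have h12 : a⁻¹*z*(1-a⁻¹) = a⁻¹*z - a⁻¹*a⁻¹*z := by ring
        have h13 := mul_pos (mul_pos (inv_pos.2 ha0) hz0) (sub_pos.2 hia)
        linarith
      have w2pos : 0 < a*z - z := by nlinarith
      have d1 : 0 ≤ TX (a⁻¹*a⁻¹*z) - TX (a⁻¹*z) :=
        le_trans (mul_nonneg w1pos.le (hfXnn _)) s1
      have t1 : fX (z - y) ≤ fX (a⁻¹*z) := by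
        apply hx₂ (mem_Ici.2 (le_trans (le_max_left _ _) hP1m))
          (mem_Ici.2 (le_trans (le_trans (le_max_left _ _) hP1m) hP1zy)) hP1zy
      have t2 : fX (a⁻¹*z) ≤ (TX (a⁻¹*a⁻¹*z) - TX (a⁻¹*z))/(a⁻¹*z - a⁻¹*a⁻¹*z) := by
        rw [le_div_iff₀ w1pos]
        nlinarith [s1]
      have t3 : (TX z - TX (a*z))/(a*z - z) ≤ fX z := by
        rw [div_le_iff₀ w2pos]
        nlinarith [s2]
      have t3pos : 0 < (TX z - TX (a*z))/(a*z - z) := div_pos d2 w2pos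
      have hfz : 0 < fX z := hXpos z hz0.le
      have main : fX (z - y) / fX z ≤
          ((TX (a⁻¹*a⁻¹*z) - TX (a⁻¹*z))/(a⁻¹*z - a⁻¹*a⁻¹*z)) /
          ((TX z - TX (a*z))/(a*z - z)) :=
        div_le_div₀ (div_nonneg d1 w1pos.le) (le_trans t1 t2) t3pos t3
      have hiden : ((TX (a⁻¹*a⁻¹*z) - TX (a⁻¹*z))/(a⁻¹*z - a⁻¹*a⁻¹*z)) /
          ((TX z - TX (a*z))/(a*z - z)) =
          a^2 * ((TX (a⁻¹*a⁻¹*z) - TX (a⁻¹*z))/(TX ((1:ℝ)*z) - TX (a*z))) := by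
        rw [one_mul]
        have hw : a*z - z = a^2*(a⁻¹*z - a⁻¹*a⁻¹*z) := by
          field_simp
        rw [div_div_div_comm, hw]
        have hw2 : (a⁻¹*z - a⁻¹*a⁻¹*z) / (a^2*(a⁻¹*z - a⁻¹*a⁻¹*z)) = (a^2)⁻¹ := by
          rw [mul_comm (a^2), div_mul_eq_div_div, div_self w1pos.ne', one_div]
        rw [hw2, div_eq_mul_inv, inv_inv, mul_comm]
      calc fX (z - y) / fX z ≤ _ := main
      _ = a^2 * ((TX (a⁻¹*a⁻¹*z) - TX (a⁻¹*z))/(TX ((1:ℝ)*z) - TX (a*z))) := hiden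
      _ < b := hQz
  -- tail decay
  have htail : Tendsto (fun z => z * fY (z/2) / fX z) atTop (𝓝 0) := by
    have h0 := dyadic_decay TY TX hTYa hTXa hTYpos hTXpos γ β hYrv hXrv hβγ
    have hq2 : Tendsto (fun z => TX (2*z)/TX z) atTop (𝓝 ((2:ℝ)^(-β))) := hXrv 2 two_pos
    have h21 : ((2:ℝ))^(-β) < 1 := Real.rpow_lt_one_of_one_lt_of_neg one_lt_two (by linarith)
    have hBlim : Tendsto (fun z => 4*(z*TY (z/4)/TX z) * (1 - TX (2*z)/TX z)⁻¹)
        atTop (𝓝 0) := by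
      have h2 := (tendsto_const_nhds.sub hq2).inv₀
        (by intro hc; rw [sub_eq_zero] at hc; exact absurd hc.symm h21.ne : (1:ℝ) - (2:ℝ)^(-β) ≠ 0)
      have h3 := (h0.const_mul 4).mul h2
      simpa using h3
    apply tendsto_of_tendsto_of_tendsto_of_le_of_le' tendsto_const_nhds hBlim
    · filter_upwards [eventually_gt_atTop 0] with z hz
      exact div_nonneg (mul_nonneg hz.le (hfYnn _)) (hfXnn _)
    · filter_upwards [eventually_ge_atTop (4*(max y₂ 0) + 1),
        eventually_ge_atTop (max x₂ 0 + 1), eventually_gt_atTop 0] with z hzy hzx hz0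
      have hmy0 : 0 ≤ max y₂ 0 := le_max_right _ _
      have hmx0 : 0 ≤ max x₂ 0 := le_max_right _ _
      have hm4 : max y₂ 0 ≤ z/4 := by linarith
      have s1 : (z/2 - z/4) * fY (z/2) ≤ TY (z/4) - TY (z/2) := hloY _ _ hm4 (by linarith)
      have hTY2 : 0 < TY (z/2) := hTYpos _
      have f1 : z * fY (z/2) ≤ 4 * TY (z/4) := by
        have e1 : z * fY (z/2) = 4*((z/2 - z/4) * fY (z/2)) := by ring
        linarith [s1, hTY2]
      have s2 : TX z - TX (2*z) ≤ (2*z - z) * fX z := hupX _ _ (by linarith) (by linarith)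
      have d2 : 0 < TX z - TX (2*z) := hdposX _ _ (by linarith) (by linarith)
      have hrhs : 4*(z*TY (z/4)/TX z) * (1 - TX (2*z)/TX z)⁻¹
          = 4*TY (z/4) * z / (TX z - TX (2*z)) := by
        have hTXz := (hTXpos z).ne'
        rw [show (1:ℝ) - TX (2*z)/TX z = (TX z - TX (2*z))/TX z by field_simp]
        field_simp
      rw [hrhs, div_le_div_iff₀ (hXpos z (by linarith)) d2]
      have hfx : TX z - TX (2*z) ≤ z * fX z := by
        have e2 : (2*z - z) * fX z = z * fX z := by ring
        linarith [s2]
      calc z * fY (z/2) * (TX z - TX (2*z)) ≤ 4*TY (z/4) * (TX z - TX (2*z)) :=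
            mul_le_mul_of_nonneg_right f1 d2.le
      _ ≤ 4*TY (z/4) * (z * fX z) := by
            apply mul_le_mul_of_nonneg_left hfx
            have := (hTYpos (z/4)).le
            positivity
      _ = 4*TY (z/4) * z * fX z := by ring
  -- numerator
  have hN : Tendsto (fun z => (∫ y in (0:ℝ)..z, y * fX (z - y) * fY y) / fX z) atTop
      (𝓝 (∫ y, y * fY y)) := by
    have hmeasN : ∀ z : ℝ, AEStronglyMeasurable
        ((Ioc (0:ℝ) (z/2)).indicator (fun y => y * fX (z - y) * fY y / fX z)) volume := by
      intro z
      apply (Measurable.indicator _ measurableSet_Ioc).aestronglyMeasurable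
      exact ((measurable_id.mul (hfXm.comp (measurable_const.sub measurable_id))).mul
        hfYm).div_const _
    have hNmain : Tendsto (fun z => ∫ y,
        (Ioc (0:ℝ) (z/2)).indicator (fun y => y * fX (z - y) * fY y / fX z) y) atTop
        (𝓝 (∫ y, y * fY y)) := by
      apply tendsto_integral_filter_of_dominated_convergence
        (bound := fun y => C * (y * fY y))
      · exact Eventually.of_forall hmeasN
      · filter_upwards [hCbd, eventually_gt_atTop 0] with z hCz hz0
        apply Eventually.of_forall
        intro y
        by_cases hy : y ∈ Ioc (0:ℝ) (z/2)
        · rw [indicator_of_mem hy]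
          have hy0 : 0 < y := hy.1
          have hv0 : 0 ≤ y * fX (z - y) * fY y / fX z :=
            div_nonneg (mul_nonneg (mul_nonneg hy0.le (hfXnn _)) (hfYnn _)) (hfXnn z)
          rw [Real.norm_eq_abs, abs_of_nonneg hv0, div_le_iff₀ (hXpos z hz0.le)]
          have hr : fX (z - y) ≤ C * fX z := hCz y ⟨hy0.le, hy.2⟩
          calc y * fX (z - y) * fY y ≤ y * (C * fX z) * fY y := by
                apply mul_le_mul_of_nonneg_right _ (hfYnn y)
                exact mul_le_mul_of_nonneg_left hr hy0.le
          _ = C * (y * fY y) * fX z := by ring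
        · rw [indicator_of_notMem hy, norm_zero]
          rcases lt_or_ge y 0 with h|h
          · rw [hfY0 y h]; simp
          · exact mul_nonneg hC0 (mul_nonneg h (hfYnn y))
      · exact hIY.const_mul C
      · apply Eventually.of_forall
        intro y
        rcases le_or_gt y 0 with hy|hy
        · have hz : ∀ z : ℝ, (Ioc (0:ℝ) (z/2)).indicator
              (fun y => y * fX (z - y) * fY y / fX z) y = 0 := by
            intro z
            apply indicator_of_notMem
            intro hc
            exact absurd hc.1 (not_lt.2 hy)
          have hyv : y * fY y = 0 := by
            rcases hy.lt_or_eq with h|h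
            · rw [hfY0 y h, mul_zero]
            · rw [h, zero_mul]
          rw [hyv]
          exact Tendsto.congr (fun z => (hz z).symm) tendsto_const_nhds
        · have h1 := (hpt y hy.le).const_mul (y * fY y)
          rw [mul_one] at h1
          apply h1.congr'
          filter_upwards [eventually_ge_atTop (2*y)] with z hz
          have hmem : y ∈ Ioc (0:ℝ) (z/2) := ⟨hy, by linarith⟩
          rw [Set.indicator_of_mem hmem (fun y => y * fX (z - y) * fY y / fX z)]
          ring
    have hTailN : Tendsto (fun z => (∫ y in (z/2)..z, y * fX (z - y) * fY y) / fX z)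
        atTop (𝓝 0) := by
      apply tendsto_of_tendsto_of_tendsto_of_le_of_le' tendsto_const_nhds htail
      · filter_upwards [eventually_ge_atTop 0] with z hz
        apply div_nonneg _ (hfXnn z)
        apply intervalIntegral.integral_nonneg (by linarith)
        intro y hy
        have hy0 : 0 ≤ y := le_trans (by linarith) hy.1
        exact mul_nonneg (mul_nonneg hy0 (hfXnn _)) (hfYnn _)
      · filter_upwards [eventually_ge_atTop (2*(max y₂ 0) + 1), eventually_gt_atTop 0]
          with z hzy hz0
        have hmy0 : 0 ≤ max y₂ 0 := le_max_right _ _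
        have h2 : (0:ℝ) ≤ z/2 := by linarith
        have key : (∫ y in (z/2)..z, y * fX (z - y) * fY y) ≤ z * fY (z/2) := by
          have hcont2 : ContinuousOn (fun y => (z * fY (z/2)) * fX (z - y)) (Icc (z/2) z) :=
            (continuousOn_const.mul (hcontXz z (z/2) z h2 le_rfl))
          have step1 : (∫ y in (z/2)..z, y * fX (z - y) * fY y)
              ≤ ∫ y in (z/2)..z, (z * fY (z/2)) * fX (z - y) := by
            apply intervalIntegral.integral_mono_on (by linarith)
              (hintN z (z/2) z h2 (by linarith) le_rfl)
              (hcont2.intervalIntegrable_of_Icc (by linarith))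
            intro y hy
            have h1 : fY y ≤ fY (z/2) := by
              have hA : y₂ ≤ z/2 := le_trans (le_max_left y₂ 0) (by linarith)
              exact hy₂ (mem_Ici.2 hA) (mem_Ici.2 (le_trans hA hy.1)) hy.1
            calc y * fX (z - y) * fY y ≤ z * fX (z - y) * fY (z/2) := by
                  apply mul_le_mul (mul_le_mul_of_nonneg_right hy.2 (hfXnn _)) h1 (hfYnn y)
                  exact mul_nonneg hz0.le (hfXnn _)
            _ = z * fY (z/2) * fX (z - y) := by ring
          have step2 : (∫ y in (z/2)..z, (z * fY (z/2)) * fX (z - y))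
              = (z * fY (z/2)) * ∫ y in (z/2)..z, fX (z - y) :=
            intervalIntegral.integral_const_mul _ _
          have step3 : (∫ y in (z/2)..z, fX (z - y)) = ∫ u in (z-z)..(z-z/2), fX u :=
            intervalIntegral.integral_comp_sub_left _ _
          have step4 : (∫ u in (z-z)..(z-z/2), fX u) ≤ 1 := by
            have e : z - z = 0 := by ring
            rw [e]
            have h5 := hTdX 0 (z - z/2) le_rfl (by linarith)
            rw [← h5]
            have h6 := hTXpos (z - z/2)
            linarith [hTX1]
          calc (∫ y in (z/2)..z, y * fX (z - y) * fY y)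
              ≤ (z * fY (z/2)) * ∫ y in (z/2)..z, fX (z - y) := by rw [← step2]; exact step1
          _ ≤ (z * fY (z/2)) * 1 := by
              rw [step3]
              apply mul_le_mul_of_nonneg_left step4 (mul_nonneg hz0.le (hfYnn _))
          _ = z * fY (z/2) := mul_one _
        have hfzpos := hXpos z hz0.le
        exact (div_le_div_iff_of_pos_right hfzpos).2 key
    have hsplit : ∀ᶠ z in atTop, (∫ y in (0:ℝ)..z, y * fX (z - y) * fY y) / fX z
        = (∫ y, (Ioc (0:ℝ) (z/2)).indicator (fun y => y * fX (z - y) * fY y / fX z) y)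
          + (∫ y in (z/2)..z, y * fX (z - y) * fY y) / fX z := by
      filter_upwards [eventually_ge_atTop 0] with z hz0
      have h2 : (0:ℝ) ≤ z/2 := by linarith
      have hsp := intervalIntegral.integral_add_adjacent_intervals
        (hintN z 0 (z/2) le_rfl h2 (by linarith)) (hintN z (z/2) z h2 (by linarith) le_rfl)
      rw [← hsp, add_div]
      congr 1
      rw [MeasureTheory.integral_indicator measurableSet_Ioc,
        ← intervalIntegral.integral_of_le h2, ← intervalIntegral.integral_div]
    have hsum := hNmain.add hTailN
    rw [add_zero] at hsum
    exact hsum.congr' (hsplit.mono (fun z h => h.symm))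
  -- denominator
  have hD : Tendsto (fun z => (∫ w in (0:ℝ)..z, fX (z - w) * fY w) / fX z) atTop
      (𝓝 1) := by
    have hmeasD : ∀ z : ℝ, AEStronglyMeasurable
        ((Ioc (0:ℝ) (z/2)).indicator (fun w => fX (z - w) * fY w / fX z)) volume := by
      intro z
      apply (Measurable.indicator _ measurableSet_Ioc).aestronglyMeasurable
      exact ((hfXm.comp (measurable_const.sub measurable_id)).mul hfYm).div_const _
    have hae0 : ∀ᵐ (w:ℝ) ∂(volume : Measure ℝ), w ≠ 0 := by
      have he : {w : ℝ | ¬ w ≠ 0} = {0} := by ext w; simp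
      rw [ae_iff, he]
      exact measure_singleton 0
    have hDmain : Tendsto (fun z => ∫ w,
        (Ioc (0:ℝ) (z/2)).indicator (fun w => fX (z - w) * fY w / fX z) w) atTop
        (𝓝 1) := by
      have hDCT : Tendsto (fun z => ∫ w,
          (Ioc (0:ℝ) (z/2)).indicator (fun w => fX (z - w) * fY w / fX z) w) atTop
          (𝓝 (∫ w, fY w)) := by
        apply tendsto_integral_filter_of_dominated_convergence
          (bound := fun w => C * fY w)
        · exact Eventually.of_forall hmeasD
        · filter_upwards [hCbd, eventually_gt_atTop 0] with z hCz hz0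
          apply Eventually.of_forall
          intro w
          by_cases hw : w ∈ Ioc (0:ℝ) (z/2)
          · rw [indicator_of_mem hw]
            have hv0 : 0 ≤ fX (z - w) * fY w / fX z :=
              div_nonneg (mul_nonneg (hfXnn _) (hfYnn _)) (hfXnn z)
            rw [Real.norm_eq_abs, abs_of_nonneg hv0, div_le_iff₀ (hXpos z hz0.le)]
            have hr : fX (z - w) ≤ C * fX z := hCz w ⟨hw.1.le, hw.2⟩
            calc fX (z - w) * fY w ≤ (C * fX z) * fY w :=
                  mul_le_mul_of_nonneg_right hr (hfYnn w)
            _ = C * fY w * fX z := by ring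
          · rw [indicator_of_notMem hw, norm_zero]
            exact mul_nonneg hC0 (hfYnn w)
        · exact hfYint.const_mul C
        · filter_upwards [hae0] with w hw0
          rcases lt_or_gt_of_ne hw0 with hw|hw
          · have hz : ∀ z : ℝ, (Ioc (0:ℝ) (z/2)).indicator
                (fun w => fX (z - w) * fY w / fX z) w = 0 := by
              intro z
              apply indicator_of_notMem
              intro hc
              exact absurd hc.1 (not_lt.2 hw.le)
            rw [hfY0 w hw]
            exact Tendsto.congr (fun z => (hz z).symm) tendsto_const_nhds
          · have h1 := (hpt w hw.le).const_mul (fY w)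
            rw [mul_one] at h1
            apply h1.congr'
            filter_upwards [eventually_ge_atTop (2*w)] with z hz
            have hmem : w ∈ Ioc (0:ℝ) (z/2) := ⟨hw, by linarith⟩
            rw [Set.indicator_of_mem hmem (fun w => fX (z - w) * fY w / fX z)]
            ring
      rw [hfY1] at hDCT
      exact hDCT
    have hTailD : Tendsto (fun z => (∫ w in (z/2)..z, fX (z - w) * fY w) / fX z)
        atTop (𝓝 0) := by
      apply tendsto_of_tendsto_of_tendsto_of_le_of_le' tendsto_const_nhds htail
      · filter_upwards [eventually_ge_atTop 0] with z hz
        apply div_nonneg _ (hfXnn z)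
        apply intervalIntegral.integral_nonneg (by linarith)
        intro w hw
        exact mul_nonneg (hfXnn _) (hfYnn _)
      · filter_upwards [eventually_ge_atTop (2*(max y₂ 0) + 1), eventually_ge_atTop 1]
          with z hzy hz1
        have hz0 : (0:ℝ) < z := by linarith
        have hmy0 : 0 ≤ max y₂ 0 := le_max_right _ _
        have h2 : (0:ℝ) ≤ z/2 := by linarith
        have key : (∫ w in (z/2)..z, fX (z - w) * fY w) ≤ z * fY (z/2) := by
          have hcont2 : ContinuousOn (fun w => fY (z/2) * fX (z - w)) (Icc (z/2) z) :=
            (continuousOn_const.mul (hcontXz z (z/2) z h2 le_rfl))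
          have step1 : (∫ w in (z/2)..z, fX (z - w) * fY w)
              ≤ ∫ w in (z/2)..z, fY (z/2) * fX (z - w) := by
            apply intervalIntegral.integral_mono_on (by linarith)
              (hintD z (z/2) z h2 (by linarith) le_rfl)
              (hcont2.intervalIntegrable_of_Icc (by linarith))
            intro w hw
            have h1 : fY w ≤ fY (z/2) := by
              have hA : y₂ ≤ z/2 := le_trans (le_max_left y₂ 0) (by linarith)
              exact hy₂ (mem_Ici.2 hA) (mem_Ici.2 (le_trans hA hw.1)) hw.1
            calc fX (z - w) * fY w ≤ fX (z - w) * fY (z/2) :=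
                  mul_le_mul_of_nonneg_left h1 (hfXnn _)
            _ = fY (z/2) * fX (z - w) := by ring
          have step2 : (∫ w in (z/2)..z, fY (z/2) * fX (z - w))
              = fY (z/2) * ∫ w in (z/2)..z, fX (z - w) :=
            intervalIntegral.integral_const_mul _ _
          have step3 : (∫ w in (z/2)..z, fX (z - w)) = ∫ u in (z-z)..(z-z/2), fX u :=
            intervalIntegral.integral_comp_sub_left _ _
          have step4 : (∫ u in (z-z)..(z-z/2), fX u) ≤ 1 := by
            have e : z - z = 0 := by ring
            rw [e]
            have h5 := hTdX 0 (z - z/2) le_rfl (by linarith)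
            rw [← h5]
            have h6 := hTXpos (z - z/2)
            linarith [hTX1]
          calc (∫ w in (z/2)..z, fX (z - w) * fY w)
              ≤ fY (z/2) * ∫ w in (z/2)..z, fX (z - w) := by rw [← step2]; exact step1
          _ ≤ fY (z/2) * 1 := by
              rw [step3]
              exact mul_le_mul_of_nonneg_left step4 (hfYnn _)
          _ = fY (z/2) := mul_one _
          _ ≤ z * fY (z/2) := by nlinarith [hfYnn (z/2)]
        exact (div_le_div_iff_of_pos_right (hXpos z hz0.le)).2 key
    have hsplit : ∀ᶠ z in atTop, (∫ w in (0:ℝ)..z, fX (z - w) * fY w) / fX z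
        = (∫ w, (Ioc (0:ℝ) (z/2)).indicator (fun w => fX (z - w) * fY w / fX z) w)
          + (∫ w in (z/2)..z, fX (z - w) * fY w) / fX z := by
      filter_upwards [eventually_ge_atTop 0] with z hz0
      have h2 : (0:ℝ) ≤ z/2 := by linarith
      have hsp := intervalIntegral.integral_add_adjacent_intervals
        (hintD z 0 (z/2) le_rfl h2 (by linarith)) (hintD z (z/2) z h2 (by linarith) le_rfl)
      rw [← hsp, add_div]
      congr 1
      rw [MeasureTheory.integral_indicator measurableSet_Ioc,
        ← intervalIntegral.integral_of_le h2, ← intervalIntegral.integral_div]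
    have hsum := hDmain.add hTailD
    rw [add_zero] at hsum
    exact hsum.congr' (hsplit.mono (fun z h => h.symm))
  have h := hN.div hD one_ne_zero
  rw [div_one] at h
  apply h.congr'
  filter_upwards [eventually_ge_atTop (0:ℝ)] with z hz
  exact div_div_div_cancel_right₀ (hXpos z hz).ne' _ _

set_option maxHeartbeats 1000000 in
/-- for independent non-negative integrable `X, Y` with positive,
continuous, ultimately decreasing densities, tail functions regularly varying with
indices `-β`, `-γ`, `1 < β`, `β + 1 < γ`, the conditional expectation
`E[Y | X+Y = VaR_α(X+Y)] = ∫_0^z y f_X(z-y) f_Y(y) dy / f_Z(z)` at `z = VaR_α(X+Y)`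
converges to `E[Y]` as `α → 1⁻`. -/
theorem stmt_16 {Ω : Type*} [MeasurableSpace Ω] (P : Measure Ω) [IsProbabilityMeasure P]
    (X Y : Ω → ℝ) (hXm : Measurable X) (hYm : Measurable Y)
    (hindep : ProbabilityTheory.IndepFun X Y P)
    (hXint : Integrable X P) (hYint : Integrable Y P)
    (fX fY : ℝ → ℝ)
    (hfX0 : ∀ x < (0:ℝ), fX x = 0) (hfY0 : ∀ y < (0:ℝ), fY y = 0)
    (hX : Measure.map X P
      = MeasureTheory.volume.withDensity (fun x => ENNReal.ofReal (fX x)))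
    (hY : Measure.map Y P
      = MeasureTheory.volume.withDensity (fun y => ENNReal.ofReal (fY y)))
    (hXpos : ∀ x ≥ (0:ℝ), 0 < fX x) (hYpos : ∀ y ≥ (0:ℝ), 0 < fY y)
    (hXc : ContinuousOn fX (Set.Ici 0)) (hYc : ContinuousOn fY (Set.Ici 0))
    (hXud : UltimatelyDecreasing fX) (hYud : UltimatelyDecreasing fY)
    (β γ : ℝ) (hβ : 1 < β) (hβγ : β + 1 < γ)
    (hXrv : RegularlyVarying (fun x => (P {ω | x < X ω}).toReal) (-β))
    (hYrv : RegularlyVarying (fun y => (P {ω | y < Y ω}).toReal) (-γ)) :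
    Tendsto (fun α =>
        (∫ y in (0:ℝ)..(VaR P (fun ω => X ω + Y ω) α),
          y * fX (VaR P (fun ω => X ω + Y ω) α - y) * fY y) /
        (∫ w in (0:ℝ)..(VaR P (fun ω => X ω + Y ω) α),
          fX (VaR P (fun ω => X ω + Y ω) α - w) * fY w))
      (𝓝[<] (1:ℝ)) (𝓝 (∫ ω, Y ω ∂P)) := by
  obtain ⟨x₂, hx₂⟩ := hXud
  obtain ⟨y₂, hy₂⟩ := hYud
  have hfXm : Measurable fX := meas_of_zero_cont hfX0 hXc
  have hfYm : Measurable fY := meas_of_zero_cont hfY0 hYc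
  have hfXnn : ∀ x, 0 ≤ fX x := by
    intro x
    rcases lt_or_ge x 0 with h | h
    · exact le_of_eq (hfX0 x h).symm
    · exact (hXpos x h).le
  have hfYnn : ∀ y, 0 ≤ fY y := by
    intro y
    rcases lt_or_ge y 0 with h | h
    · exact le_of_eq (hfY0 y h).symm
    · exact (hYpos y h).le
  set TX : ℝ → ℝ := fun z => (P {ω | z < X ω}).toReal with hTXdef
  set TY : ℝ → ℝ := fun z => (P {ω | z < Y ω}).toReal with hTYdef
  -- map measure computations
  have hmapX : ∀ s : Set ℝ, MeasurableSet s →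
      P (X ⁻¹' s) = ∫⁻ x in s, ENNReal.ofReal (fX x) := by
    intro s hs
    rw [← Measure.map_apply hXm hs, hX, withDensity_apply _ hs]
  have hmapY : ∀ s : Set ℝ, MeasurableSet s →
      P (Y ⁻¹' s) = ∫⁻ y in s, ENNReal.ofReal (fY y) := by
    intro s hs
    rw [← Measure.map_apply hYm hs, hY, withDensity_apply _ hs]
  -- positivity of lintegrals of the densities over right tails
  have hlowX : ∀ (f : ℝ → ℝ), (∀ x ≥ (0:ℝ), 0 < f x) → ContinuousOn f (Ici 0) →
      ∀ z : ℝ, 0 < ∫⁻ x in Ioi z, ENNReal.ofReal (f x) := by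
    intro f hfpos hfc z
    set m := max z 0 with hm
    have hm0 : 0 ≤ m := le_max_right _ _
    have hsub : Icc (m+1) (m+2) ⊆ Ioi z := by
      intro x hx
      have := le_max_left z 0
      simp only [mem_Ioi]
      have := hx.1
      linarith
    have hne : (Icc (m+1) (m+2) : Set ℝ).Nonempty := ⟨m+1, by constructor <;> linarith⟩
    obtain ⟨x₀, hx₀mem, hx₀min⟩ := isCompact_Icc.exists_isMinOn hne
      (hfc.mono (fun x hx => by
        have := hx.1
        simp only [mem_Ici]; linarith))
    have hc0 : 0 < f x₀ := hfpos x₀ (by have := hx₀mem.1; linarith)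
    calc (0:ℝ≥0∞) < ENNReal.ofReal (f x₀) * volume (Icc (m+1) (m+2)) := by
          apply ENNReal.mul_pos (by simpa using hc0) ?_
          rw [Real.volume_Icc]
          simp only [ne_eq, ENNReal.ofReal_eq_zero, not_le]
          linarith
    _ = ∫⁻ _x in Icc (m+1) (m+2), ENNReal.ofReal (f x₀) := by
          rw [setLIntegral_const]
    _ ≤ ∫⁻ x in Icc (m+1) (m+2), ENNReal.ofReal (f x) := by
          apply setLIntegral_mono' measurableSet_Icc
          intro x hx
          exact ENNReal.ofReal_le_ofReal (hx₀min hx)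
    _ ≤ ∫⁻ x in Ioi z, ENNReal.ofReal (f x) := lintegral_mono_set hsub
  have hPXpos : ∀ z, 0 < P (X ⁻¹' (Ioi z)) := by
    intro z
    rw [hmapX _ measurableSet_Ioi]
    exact hlowX fX hXpos hXc z
  have hPYpos : ∀ z, 0 < P (Y ⁻¹' (Ioi z)) := by
    intro z
    rw [hmapY _ measurableSet_Ioi]
    exact hlowX fY hYpos hYc z
  have hTXpos : ∀ z, 0 < TX z :=
    fun z => ENNReal.toReal_pos (hPXpos z).ne' (measure_ne_top P _)
  have hTYpos : ∀ z, 0 < TY z :=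
    fun z => ENNReal.toReal_pos (hPYpos z).ne' (measure_ne_top P _)
  have hTXa : Antitone TX := by
    intro u v huv
    apply ENNReal.toReal_mono (measure_ne_top P _)
    apply measure_mono
    intro ω hω
    exact lt_of_le_of_lt huv hω
  have hTYa : Antitone TY := by
    intro u v huv
    apply ENNReal.toReal_mono (measure_ne_top P _)
    apply measure_mono
    intro ω hω
    exact lt_of_le_of_lt huv hω
  have hTX1 : TX 0 ≤ 1 := by
    calc TX 0 ≤ (P univ).toReal :=
          ENNReal.toReal_mono (measure_ne_top P _) (measure_mono (subset_univ _))
    _ = 1 := by simp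
  -- tail difference = interval integral
  have hTd : ∀ (W : Ω → ℝ) (f : ℝ → ℝ), Measurable W → Measurable f → (∀ x, 0 ≤ f x) →
      (∀ s : Set ℝ, MeasurableSet s → P (W ⁻¹' s) = ∫⁻ x in s, ENNReal.ofReal (f x)) →
      ∀ u v : ℝ, 0 ≤ u → u ≤ v →
      (P {ω | u < W ω}).toReal - (P {ω | v < W ω}).toReal = ∫ x in u..v, f x := by
    intro W f hWm hfm hfnn hmap u v hu huv
    have h1 : (P {ω | u < W ω}) = P (W ⁻¹' (Ioc u v)) + P (W ⁻¹' (Ioi v)) := by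
      have h2 : {ω | u < W ω} = W ⁻¹' (Ioi u) := rfl
      rw [h2, show Ioi u = Ioc u v ∪ Ioi v from (Ioc_union_Ioi_eq_Ioi huv).symm,
        preimage_union]
      apply measure_union _ (hWm measurableSet_Ioi)
      exact (Ioc_disjoint_Ioi le_rfl).preimage W
    have h3 : (P {ω | v < W ω}) = P (W ⁻¹' (Ioi v)) := rfl
    rw [h1, h3, ENNReal.toReal_add (measure_ne_top P _) (measure_ne_top P _)]
    have h4 : (P (W ⁻¹' (Ioc u v))).toReal = ∫ x in u..v, f x := by
      rw [hmap _ measurableSet_Ioc, intervalIntegral.integral_of_le huv,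
        MeasureTheory.integral_eq_lintegral_of_nonneg_ae
          (ae_of_all _ (fun x => hfnn x)) (hfm.aestronglyMeasurable)]
    linarith
  have hTdX : ∀ u v : ℝ, 0 ≤ u → u ≤ v → TX u - TX v = ∫ x in u..v, fX x :=
    fun u v hu huv => hTd X fX hXm hfXm hfXnn hmapX u v hu huv
  have hTdY : ∀ u v : ℝ, 0 ≤ u → u ≤ v → TY u - TY v = ∫ x in u..v, fY x :=
    fun u v hu huv => hTd Y fY hYm hfYm hfYnn hmapY u v hu huv
  -- integrability facts for fY
  have hlint1Y : (∫⁻ y, ENNReal.ofReal (fY y)) = 1 := by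
    have h1 : P (Y ⁻¹' univ) = ∫⁻ y in univ, ENNReal.ofReal (fY y) :=
      hmapY univ MeasurableSet.univ
    simpa using h1.symm
  have hfYint : Integrable fY volume := by
    refine ⟨hfYm.aestronglyMeasurable, ?_⟩
    rw [hasFiniteIntegral_iff_norm]
    have h2 : (∫⁻ y, ENNReal.ofReal ‖fY y‖) = 1 := by
      rw [← hlint1Y]
      apply lintegral_congr
      intro y
      rw [Real.norm_eq_abs, abs_of_nonneg (hfYnn y)]
    rw [h2]
    exact ENNReal.one_lt_top
  have hfY1 : (∫ y, fY y) = 1 := by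
    rw [MeasureTheory.integral_eq_lintegral_of_nonneg_ae (ae_of_all _ hfYnn)
      hfYm.aestronglyMeasurable, hlint1Y]
    simp
  have htoNN : Measurable (fun y => Real.toNNReal (fY y)) :=
    measurable_real_toNNReal.comp hfYm
  have hIY : Integrable (fun y => y * fY y) volume := by
    have h1 : Integrable id (Measure.map Y P) :=
      (integrable_map_measure aestronglyMeasurable_id hYm.aemeasurable).2 hYint
    rw [hY] at h1
    have h2 : Integrable (fun y => Real.toNNReal (fY y) • id y) volume := by
      exact (integrable_withDensity_iff_integrable_smul htoNN).1 h1
    apply h2.congr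
    apply ae_of_all
    intro y
    simp only [id_eq, NNReal.smul_def, smul_eq_mul]
    rw [Real.coe_toNNReal _ (hfYnn y), mul_comm]
  have hEY : (∫ ω, Y ω ∂P) = ∫ y, y * fY y := by
    have h1 : (∫ y, id y ∂(Measure.map Y P)) = ∫ ω, id (Y ω) ∂P :=
      integral_map hYm.aemeasurable aestronglyMeasurable_id
    have h2 : (∫ y, id y ∂(Measure.map Y P)) = ∫ y, Real.toNNReal (fY y) • id y := by
      rw [hY]
      exact integral_withDensity_eq_integral_smul htoNN id
    have h3 : (∫ ω, Y ω ∂P) = ∫ y, Real.toNNReal (fY y) • id y := by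
      rw [← h2, h1]
      rfl
    rw [h3]
    apply integral_congr_ae
    apply ae_of_all
    intro y
    simp only [id_eq, NNReal.smul_def, smul_eq_mul]
    rw [Real.coe_toNNReal _ (hfYnn y), mul_comm]
  -- Y is a.s. nonneg
  have hY0 : P (Y ⁻¹' (Iio 0)) = 0 := by
    rw [hmapY _ measurableSet_Iio]
    have h1 : ∫⁻ y in Iio (0:ℝ), ENNReal.ofReal (fY y) = ∫⁻ _y in Iio (0:ℝ), 0 := by
      apply setLIntegral_congr_fun measurableSet_Iio
      intro y hy
      dsimp only
      rw [hfY0 y hy, ENNReal.ofReal_zero]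
    rw [h1, lintegral_zero]
  -- distribution function of Z
  set Z : Ω → ℝ := fun ω => X ω + Y ω with hZdef
  have hZm : Measurable Z := hXm.add hYm
  set F : ℝ → ℝ := fun z => (P {ω | Z ω ≤ z}).toReal with hFdef
  have hFmono : Monotone F := by
    intro u v huv
    apply ENNReal.toReal_mono (measure_ne_top P _)
    apply measure_mono
    intro ω hω
    exact le_trans hω huv
  have hFlt1 : ∀ M : ℝ, F M < 1 := by
    intro M
    set B : Set Ω := X ⁻¹' (Ioi M) ∩ Y ⁻¹' (Ici 0) with hBdef
    have hBmeas : MeasurableSet B :=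
      (hXm measurableSet_Ioi).inter (hYm measurableSet_Ici)
    have hPB : P B = P (X ⁻¹' (Ioi M)) * P (Y ⁻¹' (Ici 0)) :=
      hindep.measure_inter_preimage_eq_mul _ _ measurableSet_Ioi measurableSet_Ici
    have hPY1 : P (Y ⁻¹' (Ici 0)) = 1 := by
      have h1 : Y ⁻¹' (Ici 0) = (Y ⁻¹' (Iio 0))ᶜ := by
        ext ω; simp [not_lt]
      rw [h1, measure_compl (hYm measurableSet_Iio) (measure_ne_top P _), hY0,
        measure_univ, tsub_zero]
    have hPBpos : 0 < P B := by
      rw [hPB, hPY1, mul_one]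
      exact hPXpos M
    have hdisj : Disjoint {ω | Z ω ≤ M} B := by
      rw [disjoint_left]
      intro ω hω hB
      have h1 : M < X ω := hB.1
      have h2 : (0:ℝ) ≤ Y ω := hB.2
      have h3 : Z ω ≤ M := hω
      have : M < Z ω := by
        simp only [hZdef]
        calc M < X ω := h1
        _ ≤ X ω + Y ω := by linarith
      linarith
    have hle : P {ω | Z ω ≤ M} + P B ≤ 1 := by
      rw [← measure_union hdisj hBmeas]
      calc P ({ω | Z ω ≤ M} ∪ B) ≤ P univ := measure_mono (subset_univ _)
      _ = 1 := measure_univ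
    have h4 : (P {ω | Z ω ≤ M}).toReal + (P B).toReal ≤ 1 := by
      rw [← ENNReal.toReal_add (measure_ne_top P _) (measure_ne_top P _)]
      calc ((P {ω | Z ω ≤ M} + P B)).toReal ≤ (1:ℝ≥0∞).toReal :=
            ENNReal.toReal_mono (by simp) hle
      _ = 1 := by simp
    have h5 : 0 < (P B).toReal := ENNReal.toReal_pos hPBpos.ne' (measure_ne_top P _)
    simp only [hFdef]
    linarith
  have hFtop : Tendsto F atTop (𝓝 1) := by
    have h1 : Tendsto (fun z => Measure.map Z P (Iic z)) atTop
        (𝓝 (Measure.map Z P univ)) := tendsto_measure_Iic_atTop _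
    have h2 : Measure.map Z P univ = 1 := by
      rw [Measure.map_apply hZm MeasurableSet.univ]
      simp
    rw [h2] at h1
    have h3 := (ENNReal.tendsto_toReal ENNReal.one_ne_top).comp h1
    simp only [ENNReal.toReal_one] at h3
    apply h3.congr
    intro z
    simp only [Function.comp_apply, hFdef]
    rw [Measure.map_apply hZm measurableSet_Iic]
    rfl
  have hVaR : Tendsto (fun α => VaR P Z α) (𝓝[<] (1:ℝ)) atTop := by
    rw [tendsto_atTop]
    intro M
    have h1 : F M < 1 := hFlt1 M
    filter_upwards [Ioo_mem_nhdsLT_of_mem (⟨h1, le_refl (1:ℝ)⟩ : (1:ℝ) ∈ Ioc (F M) 1)]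
      with α hα
    apply le_csInf
    · obtain ⟨z, hz⟩ := (hFtop.eventually (eventually_gt_nhds hα.2)).exists
      exact ⟨z, hz.le⟩
    · intro w hw
      by_contra hcon
      push_neg at hcon
      have h2 : F w ≤ F M := hFmono hcon.le
      have h3 : α ≤ F w := hw
      linarith [hα.1]
  -- final assembly
  have hmain := main_limit fX fY TX TY β γ hβ hβγ hfX0 hfY0 hXpos hYpos hXc hYc
    hfXm hfYm x₂ y₂ hx₂ hy₂ hTXa hTYa hTXpos hTYpos hTX1 hTdX hTdY hXrv hYrv
    hIY hfYint hfY1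
  have hcomp := hmain.comp hVaR
  rw [hEY]
  exact hcomp
end
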